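/- arXiv:2205.08526 — 7 statements merged into one kernel-verified Lean document; each statement's English description precedes it below -/
import Mathlib

section
/- Let (X, μ) be a measure space and 0 < p < ∞. Let (f_n) be a sequence of real-valued measurable functions on X that is uniformly bounded in L^p(X, μ), i.e. sup_n ∫_X |f_n|^p dμ < ∞, and that converges μ-almost everywhere to a function f. Then ∫_X |f|^p dμ < ∞ and lim_{n→∞} ( ∫_X |f_n|^p dμ − ∫_X |f_n − f|^p dμ ) = ∫_X |f|^p dμ. -/
open MeasureTheory Filter Topology
open scoped ENNReal

lemma bl_step1 {p δ : ℝ} (hp : 0 < p) (hδ : 0 < δ) {a b : ℝ} (ha : 0 ≤ a) (hb : 0 ≤ b) :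
    (a + b) ^ p ≤ (1 + δ) ^ p * a ^ p + (1 + 1/δ) ^ p * b ^ p := by
  by_cases hba : b ≤ δ * a
  · have h1 : (a + b) ^ p ≤ ((1 + δ) * a) ^ p := by
      apply Real.rpow_le_rpow (by positivity) (by nlinarith) hp.le
    rw [Real.mul_rpow (by positivity) ha] at h1
    have h2 : 0 ≤ (1 + 1/δ) ^ p * b ^ p := by positivity
    linarith
  · push_neg at hba
    have hinv : δ * (1/δ) = 1 := by field_simp
    have h1 : (a + b) ^ p ≤ ((1 + 1/δ) * b) ^ p := by
      apply Real.rpow_le_rpow (by positivity) _ hp.le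
      nlinarith
    rw [Real.mul_rpow (by positivity) hb] at h1
    have h2 : 0 ≤ (1 + δ) ^ p * a ^ p := by positivity
    linarith

lemma bl_key {p : ℝ} (hp : 0 < p) {ε : ℝ} (hε : 0 < ε) :
    ∃ Cε : ℝ, 0 ≤ Cε ∧ ∀ u v : ℝ,
      |(|u + v| ^ p - |u| ^ p)| ≤ ε * |u| ^ p + Cε * |v| ^ p := by
  set q : ℝ := (1 + ε) ^ (1/(2*p)) with hq_def
  have hq1 : 1 < q := by
    rw [hq_def]
    exact (Real.one_lt_rpow_iff_of_pos (by positivity)).mpr (Or.inl ⟨by linarith, by positivity⟩)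
  set δ : ℝ := q - 1 with hδ_def
  have hδ : 0 < δ := by simp [hδ_def]; linarith
  have hq2 : 1 + δ = q := by ring
  set K : ℝ := q ^ p with hK_def
  have hK1 : 1 ≤ K := by
    calc (1:ℝ) = 1 ^ p := (Real.one_rpow p).symm
    _ ≤ q ^ p := Real.rpow_le_rpow zero_le_one hq1.le hp.le
  have hKK : K * K = 1 + ε := by
    rw [hK_def, ← Real.rpow_add (by linarith)]
    rw [hq_def, ← Real.rpow_mul (by positivity)]
    rw [show 1/(2*p) * (p + p) = 1 by field_simp; ring, Real.rpow_one]
  have hKε : K ≤ 1 + ε := by nlinarith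
  set Cδ : ℝ := (1 + 1/δ) ^ p with hCδ_def
  have hCδ0 : 0 ≤ Cδ := Real.rpow_nonneg (by positivity) p
  refine ⟨K * Cδ, by positivity, fun u v => ?_⟩
  have hu : 0 ≤ |u| ^ p := Real.rpow_nonneg (abs_nonneg u) p
  have hv : 0 ≤ |v| ^ p := Real.rpow_nonneg (abs_nonneg v) p
  have huv : 0 ≤ |u + v| ^ p := Real.rpow_nonneg (abs_nonneg _) p
  have h1 : |u + v| ^ p ≤ K * |u| ^ p + Cδ * |v| ^ p := by
    calc |u + v| ^ p ≤ (|u| + |v|) ^ p :=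
          Real.rpow_le_rpow (abs_nonneg _) (abs_add_le u v) hp.le
    _ ≤ (1 + δ) ^ p * |u| ^ p + (1 + 1/δ) ^ p * |v| ^ p :=
          bl_step1 hp hδ (abs_nonneg u) (abs_nonneg v)
    _ = K * |u| ^ p + Cδ * |v| ^ p := by rw [hq2]
  have h2 : |u| ^ p ≤ K * |u + v| ^ p + Cδ * |v| ^ p := by
    calc |u| ^ p ≤ (|u + v| + |v|) ^ p := by
          apply Real.rpow_le_rpow (abs_nonneg _) _ hp.le
          have := abs_add_le (u + v) (-v); simpa using this
    _ ≤ (1 + δ) ^ p * |u + v| ^ p + (1 + 1/δ) ^ p * |v| ^ p :=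
          bl_step1 hp hδ (abs_nonneg _) (abs_nonneg v)
    _ = K * |u + v| ^ p + Cδ * |v| ^ p := by rw [hq2]
  rw [abs_le]
  constructor
  · nlinarith [mul_le_mul_of_nonneg_left h1 (by linarith : (0:ℝ) ≤ K - 1)]
  · nlinarith

/-- **Brezis–Lieb lemma.** If `(f n)` is a sequence of measurable functions, uniformly
bounded in `L^p`, converging `μ`-a.e. to `F`, then `F ∈ L^p` and
`∫ |f n|^p dμ − ∫ |f n − F|^p dμ → ∫ |F|^p dμ`. -/
theorem brezis_lieb {X : Type*} [MeasurableSpace X] (μ : Measure X) (p : ℝ) (hp : 0 < p)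
    (f : ℕ → X → ℝ) (F : X → ℝ)
    (hmeas : ∀ n, Measurable (f n))
    (hbdd : ∃ C : ℝ≥0∞, C ≠ ⊤ ∧ ∀ n, ∫⁻ x, ENNReal.ofReal (|f n x| ^ p) ∂μ ≤ C)
    (hae : ∀ᵐ x ∂μ, Tendsto (fun n => f n x) atTop (𝓝 (F x))) :
    (∫⁻ x, ENNReal.ofReal (|F x| ^ p) ∂μ) ≠ ⊤ ∧
    Tendsto (fun n =>
        (∫⁻ x, ENNReal.ofReal (|f n x| ^ p) ∂μ).toReal -
        (∫⁻ x, ENNReal.ofReal (|f n x - F x| ^ p) ∂μ).toReal)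
      atTop (𝓝 ((∫⁻ x, ENNReal.ofReal (|F x| ^ p) ∂μ).toReal)) := by
  obtain ⟨C, hCtop, hC⟩ := hbdd
  have hFm : AEMeasurable F μ :=
    aemeasurable_of_tendsto_metrizable_ae atTop (fun n => (hmeas n).aemeasurable) hae
  have ham : ∀ n, Measurable fun x => |f n x| ^ p :=
    fun n => (hmeas n).abs.pow measurable_const
  have hbm : ∀ n, AEMeasurable (fun x => |f n x - F x| ^ p) μ :=
    fun n => (measurable_abs.comp_aemeasurable ((hmeas n).aemeasurable.sub hFm)).pow aemeasurable_const
  have hcm : AEMeasurable (fun x => |F x| ^ p) μ :=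
    (measurable_abs.comp_aemeasurable hFm).pow aemeasurable_const
  -- pointwise limits
  have haetend : ∀ᵐ x ∂μ, Tendsto (fun n => |f n x| ^ p) atTop (𝓝 (|F x| ^ p)) ∧
      Tendsto (fun n => |f n x - F x| ^ p) atTop (𝓝 0) := by
    filter_upwards [hae] with x hx
    constructor
    · have := ((Real.continuousAt_rpow_const _ p (Or.inr hp.le)).tendsto).comp hx.abs
      simpa [Function.comp_def] using this
    · have h1 : Tendsto (fun n => f n x - F x) atTop (𝓝 0) := by
        simpa using hx.sub (tendsto_const_nhds (x := F x))
      have h2 := ((Real.continuousAt_rpow_const _ p (Or.inr hp.le)).tendsto).comp h1.abs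
      simpa [Function.comp_def, Real.zero_rpow hp.ne'] using h2
  -- Fatou: the limit is in L^p
  have hL : (∫⁻ x, ENNReal.ofReal (|F x| ^ p) ∂μ) ≤ C := by
    have h1 : ∀ᵐ x ∂μ, ENNReal.ofReal (|F x| ^ p) ≤
        atTop.liminf fun n => ENNReal.ofReal (|f n x| ^ p) := by
      filter_upwards [haetend] with x hx
      have h2 : Tendsto (fun n => ENNReal.ofReal (|f n x| ^ p)) atTop
          (𝓝 (ENNReal.ofReal (|F x| ^ p))) := (ENNReal.continuous_ofReal.tendsto _).comp hx.1
      exact le_of_eq h2.liminf_eq.symm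
    calc (∫⁻ x, ENNReal.ofReal (|F x| ^ p) ∂μ)
        ≤ ∫⁻ x, atTop.liminf (fun n => ENNReal.ofReal (|f n x| ^ p)) ∂μ := lintegral_mono_ae h1
      _ ≤ atTop.liminf fun n => ∫⁻ x, ENNReal.ofReal (|f n x| ^ p) ∂μ :=
          lintegral_liminf_le fun n => (ham n).ennreal_ofReal
      _ ≤ C := liminf_le_of_frequently_le' (Frequently.of_forall hC)
  have hLtop : (∫⁻ x, ENNReal.ofReal (|F x| ^ p) ∂μ) ≠ ⊤ := (hL.trans_lt hCtop.lt_top).ne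
  refine ⟨hLtop, ?_⟩
  -- uniform bound for ∫ |f n - F|^p
  have hreal2 : ∀ u v : ℝ, |u - v| ^ p ≤ 2 ^ p * (|u| ^ p + |v| ^ p) := by
    intro u v
    have h1 : |u - v| ^ p ≤ (|u| + |v|) ^ p := by
      apply Real.rpow_le_rpow (abs_nonneg _) _ hp.le
      have := abs_add_le u (-v); simpa [sub_eq_add_neg] using this
    have h2 := bl_step1 hp one_pos (abs_nonneg u) (abs_nonneg v)
    norm_num at h2
    nlinarith [h2, h1]
  have hB : ∀ n, (∫⁻ x, ENNReal.ofReal (|f n x - F x| ^ p) ∂μ) ≤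
      ENNReal.ofReal (2 ^ p) * (C + ∫⁻ x, ENNReal.ofReal (|F x| ^ p) ∂μ) := by
    intro n
    calc (∫⁻ x, ENNReal.ofReal (|f n x - F x| ^ p) ∂μ)
        ≤ ∫⁻ x, ENNReal.ofReal (2 ^ p) *
            (ENNReal.ofReal (|f n x| ^ p) + ENNReal.ofReal (|F x| ^ p)) ∂μ := by
          apply lintegral_mono fun x => ?_
          rw [← ENNReal.ofReal_add (Real.rpow_nonneg (abs_nonneg _) p)
              (Real.rpow_nonneg (abs_nonneg _) p),
            ← ENNReal.ofReal_mul (by positivity)]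
          exact ENNReal.ofReal_le_ofReal (hreal2 (f n x) (F x))
      _ = ENNReal.ofReal (2 ^ p) *
            ∫⁻ x, (ENNReal.ofReal (|f n x| ^ p) + ENNReal.ofReal (|F x| ^ p)) ∂μ :=
          lintegral_const_mul' _ _ ENNReal.ofReal_ne_top
      _ = ENNReal.ofReal (2 ^ p) * ((∫⁻ x, ENNReal.ofReal (|f n x| ^ p) ∂μ) +
            ∫⁻ x, ENNReal.ofReal (|F x| ^ p) ∂μ) := by
          rw [lintegral_add_left ((ham n).ennreal_ofReal)]
      _ ≤ _ := mul_le_mul_right (add_le_add (hC n) le_rfl) _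
  have hBtop : ∀ n, (∫⁻ x, ENNReal.ofReal (|f n x - F x| ^ p) ∂μ) ≠ ⊤ := by
    intro n
    refine ((hB n).trans_lt (ENNReal.mul_lt_top ENNReal.ofReal_lt_top ?_)).ne
    exact ENNReal.add_lt_top.mpr ⟨hCtop.lt_top, hLtop.lt_top⟩
  have hAtop : ∀ n, (∫⁻ x, ENNReal.ofReal (|f n x| ^ p) ∂μ) ≠ ⊤ :=
    fun n => ((hC n).trans_lt hCtop.lt_top).ne
  -- integrability helper
  have key_int : ∀ g : X → ℝ, AEMeasurable g μ → (∀ x, 0 ≤ g x) →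
      (∫⁻ x, ENNReal.ofReal (g x) ∂μ) ≠ ⊤ →
      Integrable g μ ∧ ∫ x, g x ∂μ = (∫⁻ x, ENNReal.ofReal (g x) ∂μ).toReal := by
    intro g hg h0 hfin
    refine ⟨⟨hg.aestronglyMeasurable, ?_⟩, ?_⟩
    · rw [hasFiniteIntegral_iff_ofReal (ae_of_all _ h0)]
      exact hfin.lt_top
    · rw [integral_eq_lintegral_of_nonneg_ae (ae_of_all _ h0) hg.aestronglyMeasurable]
  have hai := fun n => key_int _ (ham n).aemeasurable
    (fun x => Real.rpow_nonneg (abs_nonneg _) p) (hAtop n)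
  have hbi := fun n => key_int _ (hbm n)
    (fun x => Real.rpow_nonneg (abs_nonneg _) p) (hBtop n)
  have hci := key_int _ hcm (fun x => Real.rpow_nonneg (abs_nonneg _) p) hLtop
  -- identity
  have hIn : ∀ n, (∫⁻ x, ENNReal.ofReal (|f n x| ^ p) ∂μ).toReal -
      (∫⁻ x, ENNReal.ofReal (|f n x - F x| ^ p) ∂μ).toReal -
      (∫⁻ x, ENNReal.ofReal (|F x| ^ p) ∂μ).toReal =
      ∫ x, (|f n x| ^ p - |f n x - F x| ^ p - |F x| ^ p) ∂μ := by
    intro n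
    have e1 := integral_sub ((hai n).1.sub (hbi n).1) hci.1
    have e2 := integral_sub (hai n).1 (hbi n).1
    simp only [Pi.sub_apply] at e1
    rw [e1, e2, (hai n).2, (hbi n).2, hci.2]
  -- uniform real bound
  set M : ℝ := (ENNReal.ofReal (2 ^ p) *
      (C + ∫⁻ x, ENNReal.ofReal (|F x| ^ p) ∂μ)).toReal with hM_def
  have hM0 : 0 ≤ M := ENNReal.toReal_nonneg
  have hbM : ∀ n, ∫ x, |f n x - F x| ^ p ∂μ ≤ M := by
    intro n
    rw [(hbi n).2]
    apply ENNReal.toReal_mono _ (hB n)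
    exact ENNReal.mul_ne_top ENNReal.ofReal_ne_top
      (ENNReal.add_ne_top.mpr ⟨hCtop, hLtop⟩)
  -- the key limit
  have htend0 : Tendsto
      (fun n => ∫ x, (|f n x| ^ p - |f n x - F x| ^ p - |F x| ^ p) ∂μ) atTop (𝓝 0) := by
    rw [NormedAddCommGroup.tendsto_nhds_zero]
    intro ε' hε'
    have hεpos : 0 < ε' / (2 * (M + 1)) := by positivity
    obtain ⟨Cε, hCε0, hkey⟩ := bl_key hp hεpos
    set ε : ℝ := ε' / (2 * (M + 1)) with hε_def
    set W : ℕ → X → ℝ := fun n x =>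
      max (|(|f n x| ^ p - |f n x - F x| ^ p - |F x| ^ p)| - ε * |f n x - F x| ^ p) 0
      with hW_def
    have hW0 : ∀ n x, 0 ≤ W n x := fun n x => le_max_right _ _
    have hWm : ∀ n, AEStronglyMeasurable (W n) μ := by
      intro n
      apply AEMeasurable.aestronglyMeasurable
      exact ((measurable_abs.comp_aemeasurable
        (((ham n).aemeasurable.sub (hbm n)).sub hcm)).sub
        ((hbm n).const_mul ε)).max aemeasurable_const
    have hWle : ∀ n x, W n x ≤ (Cε + 1) * |F x| ^ p := by
      intro n x
      have hk := hkey (f n x - F x) (F x)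
      rw [show f n x - F x + F x = f n x by ring] at hk
      have habs : |(|f n x| ^ p - |f n x - F x| ^ p - |F x| ^ p)| ≤
          |(|f n x| ^ p - |f n x - F x| ^ p)| + |F x| ^ p := by
        have h1 := abs_add_le (|f n x| ^ p - |f n x - F x| ^ p) (-(|F x| ^ p))
        rw [abs_neg, abs_of_nonneg (Real.rpow_nonneg (abs_nonneg _) p)] at h1
        simpa [sub_eq_add_neg] using h1
      have hc0 : 0 ≤ |F x| ^ p := Real.rpow_nonneg (abs_nonneg _) p
      apply max_le _ (by positivity)
      linarith
    have hWtend : ∀ᵐ x ∂μ, Tendsto (fun n => W n x) atTop (𝓝 0) := by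
      filter_upwards [haetend] with x hx
      have h1 : Tendsto (fun n => |f n x| ^ p - |f n x - F x| ^ p - |F x| ^ p) atTop (𝓝 0) := by
        have := (hx.1.sub hx.2).sub (tendsto_const_nhds (x := |F x| ^ p))
        simpa using this
      have h2 : Tendsto (fun n => |(|f n x| ^ p - |f n x - F x| ^ p - |F x| ^ p)| -
          ε * |f n x - F x| ^ p) atTop (𝓝 0) := by
        have := h1.abs.sub (hx.2.const_mul ε)
        simpa using this
      have h3 := h2.max (tendsto_const_nhds (x := (0:ℝ)))
      simpa using h3
    have hbound_int : Integrable (fun x => (Cε + 1) * |F x| ^ p) μ := hci.1.const_mul _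
    have hWint : ∀ n, Integrable (W n) μ := by
      intro n
      apply hbound_int.mono (hWm n) (ae_of_all _ fun x => ?_)
      rw [Real.norm_eq_abs, Real.norm_eq_abs, abs_of_nonneg (hW0 n x)]
      exact (hWle n x).trans (le_abs_self _)
    have hWlim : Tendsto (fun n => ∫ x, W n x ∂μ) atTop (𝓝 0) := by
      have h0 := tendsto_integral_of_dominated_convergence
        (fun x => (Cε + 1) * |F x| ^ p) hWm hbound_int
        (fun n => ae_of_all _ fun x => by
          rw [Real.norm_eq_abs, abs_of_nonneg (hW0 n x)]; exact hWle n x) hWtend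
      simpa using h0
    have hev := hWlim.eventually_lt_const (show (0:ℝ) < ε' / 2 by positivity)
    filter_upwards [hev] with n hn
    rw [Real.norm_eq_abs]
    have hgi : Integrable (fun x => |f n x| ^ p - |f n x - F x| ^ p - |F x| ^ p) μ :=
      ((hai n).1.sub (hbi n).1).sub hci.1
    have h1 : |∫ x, (|f n x| ^ p - |f n x - F x| ^ p - |F x| ^ p) ∂μ| ≤
        ∫ x, |(|f n x| ^ p - |f n x - F x| ^ p - |F x| ^ p)| ∂μ := by
      have := norm_integral_le_integral_norm
        (fun x => |f n x| ^ p - |f n x - F x| ^ p - |F x| ^ p) (μ := μ)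
      simpa [Real.norm_eq_abs] using this
    have h2 : ∫ x, |(|f n x| ^ p - |f n x - F x| ^ p - |F x| ^ p)| ∂μ ≤
        ∫ x, (W n x + ε * |f n x - F x| ^ p) ∂μ := by
      apply integral_mono hgi.abs ((hWint n).add ((hbi n).1.const_mul ε))
      intro x
      have h3 := le_max_left
        (|(|f n x| ^ p - |f n x - F x| ^ p - |F x| ^ p)| - ε * |f n x - F x| ^ p) (0:ℝ)
      calc |(|f n x| ^ p - |f n x - F x| ^ p - |F x| ^ p)| ≤
          max (|(|f n x| ^ p - |f n x - F x| ^ p - |F x| ^ p)| -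
            ε * |f n x - F x| ^ p) 0 + ε * |f n x - F x| ^ p := by linarith
        _ = W n x + ε * |f n x - F x| ^ p := rfl
    have h3 : ∫ x, (W n x + ε * |f n x - F x| ^ p) ∂μ =
        (∫ x, W n x ∂μ) + ε * ∫ x, |f n x - F x| ^ p ∂μ := by
      rw [integral_add (hWint n) ((hbi n).1.const_mul ε), integral_const_mul]
    have h5 : ε * (M + 1) = ε' / 2 := by
      rw [hε_def]; field_simp
    have h4 : ε * ∫ x, |f n x - F x| ^ p ∂μ ≤ ε' / 2 := by
      have h6 := mul_le_mul_of_nonneg_left (hbM n) hεpos.le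
      nlinarith
    linarith
  have hfinal := htend0.add (tendsto_const_nhds
    (x := (∫⁻ x, ENNReal.ofReal (|F x| ^ p) ∂μ).toReal))
  rw [zero_add] at hfinal
  refine hfinal.congr fun n => ?_
  rw [← hIn n]; ring
end

section
/- Let V be a real reflexive and strictly convex Banach space, and let G be a group acting on V by linear isometries, i.e. there is a representation π of G by bounded linear automorphisms of V with ‖π(g)v‖ = ‖v‖ for all g ∈ G and v ∈ V. Let V^G = { v ∈ V : π(g)v = v for all g ∈ G }. Let F : V → ℝ be continuously Fréchet differentiable and G-invariant, i.e. F(π(g)v) = F(v) for all g ∈ G and v ∈ V. If v ∈ V^G and the Fréchet derivative F′(v) vanishes on V^G (that is, F′(v)(w) = 0 for every w ∈ V^G), then F′(v) = 0 on all of V. -/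
open MeasureTheory Filter Topology

/-- **Principle of symmetric criticality (Kobayashi–Ôtani).** Let `V` be a real reflexive and
strictly convex Banach space, and `G` a group acting on `V` by linear isometries via a
representation `π`. If `F : V → ℝ` is `C¹` and `G`-invariant, `v` is a fixed point of the
action, and the Fréchet derivative `F′(v)` vanishes on the fixed-point subspace `V^G`, then
`F′(v) = 0` on all of `V`. -/
theorem principle_of_symmetric_criticality
    {V : Type*} [NormedAddCommGroup V] [NormedSpace ℝ V] [CompleteSpace V]
    [StrictConvexSpace ℝ V]
    (hreflexive : Function.Surjective (NormedSpace.inclusionInDoubleDual ℝ V))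
    {G : Type*} [Group G] (π : G →* (V →L[ℝ] V))
    (hiso : ∀ (g : G) (v : V), ‖π g v‖ = ‖v‖)
    (F : V → ℝ) (hF : ContDiff ℝ 1 F)
    (hinv : ∀ (g : G) (v : V), F (π g v) = F v)
    (v : V) (hv : ∀ g : G, π g v = v)
    (hcrit : ∀ w : V, (∀ g : G, π g w = w) → fderiv ℝ F v w = 0) :
    fderiv ℝ F v = 0 := by
  set f := fderiv ℝ F v with hfdef
  by_contra hfne
  -- `f` is `G`-invariant: `f (π g w) = f w`.
  have hfinv : ∀ (g : G) (w : V), f (π g w) = f w := by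
    intro g w
    have h2 : F ∘ (π g) = F := funext fun x => hinv g x
    have h1 : fderiv ℝ (F ∘ (π g)) v = (fderiv ℝ F ((π g) v)).comp (π g : V →L[ℝ] V) := by
      rw [fderiv_comp v (hF.differentiable one_ne_zero _) ((π g : V →L[ℝ] V).differentiableAt),
        (π g : V →L[ℝ] V).fderiv]
    rw [h2, hv g] at h1
    exact (congrFun (congrArg DFunLike.coe h1) w).symm
  have hfpos : 0 < ‖f‖ := norm_pos_iff.mpr hfne
  -- norm attainment via reflexivity
  obtain ⟨Φ, hΦ1, hΦ2⟩ := exists_dual_vector ℝ f (norm_ne_zero_iff.mpr hfne)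
  obtain ⟨w₀, hw₀⟩ := hreflexive Φ
  have hnorm : ‖w₀‖ = 1 := by
    have : ‖NormedSpace.inclusionInDoubleDual ℝ V w₀‖ = ‖w₀‖ :=
      (NormedSpace.inclusionInDoubleDualLi ℝ).norm_map w₀
    rw [hw₀, hΦ1] at this
    exact this.symm
  have hfw₀ : f w₀ = ‖f‖ := by
    have := NormedSpace.dual_def ℝ V w₀ f
    rw [hw₀] at this
    rw [← this, hΦ2]
    norm_num
  -- uniqueness of the norm-attaining point via strict convexity
  have huniq : ∀ w : V, ‖w‖ ≤ 1 → f w = ‖f‖ → w = w₀ := by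
    intro w hw hfw
    by_contra hne
    have hm : ‖(1/2 : ℝ) • w + (1/2 : ℝ) • w₀‖ < 1 :=
      norm_combo_lt_of_ne hw hnorm.le hne (by norm_num) (by norm_num) (by norm_num)
    have hfm : f ((1/2 : ℝ) • w + (1/2 : ℝ) • w₀) = ‖f‖ := by
      simp [hfw, hfw₀]; ring
    have hle : ‖f‖ ≤ ‖f‖ * ‖(1/2 : ℝ) • w + (1/2 : ℝ) • w₀‖ := by
      calc ‖f‖ = f ((1/2 : ℝ) • w + (1/2 : ℝ) • w₀) := hfm.symm
        _ ≤ ‖f ((1/2 : ℝ) • w + (1/2 : ℝ) • w₀)‖ := le_abs_self _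
        _ ≤ ‖f‖ * ‖(1/2 : ℝ) • w + (1/2 : ℝ) • w₀‖ := f.le_opNorm _
    nlinarith
  -- `w₀` is a fixed point
  have hfix : ∀ g : G, π g w₀ = w₀ := by
    intro g
    exact huniq (π g w₀) (by rw [hiso g w₀, hnorm]) (by rw [hfinv g w₀, hfw₀])
  have h0 := hcrit w₀ hfix
  rw [hfw₀] at h0
  exact absurd h0 (ne_of_gt hfpos)
end

section
/- Let N ≥ 1 and 0 < q < ∞. Let (u_n) be a sequence of measurable functions on ℝ^N with sup_n ∫_{ℝ^N} |u_n|^q dx < ∞ that converges Lebesgue-almost everywhere to a function u. Then ∫_{ℝ^N} |u|^q dx < ∞, the functions R ↦ limsup_{n→∞} ∫_{{‖x‖ ≥ R}} |u_n|^q dx and R ↦ limsup_{n→∞} ∫_{{‖x‖ ≥ R}} |u_n − u|^q dx both converge as R → ∞, and their limits are equal: lim_{R→∞} limsup_{n→∞} ∫_{{‖x‖ ≥ R}} |u_n|^q dx = lim_{R→∞} limsup_{n→∞} ∫_{{‖x‖ ≥ R}} |u_n − u|^q dx. -/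
open MeasureTheory Filter Topology
open scoped ENNReal

/-- Elementary power inequality: for `q > 0` and `ε > 0` there is `C ≥ 0` with
`(a+b)^q ≤ (1+ε) a^q + C b^q` for all nonnegative `a b`. -/
lemma tail_limsup_eq_pow_ineq {q : ℝ} (hq : 0 < q) {ε : ℝ} (hε : 0 < ε) :
    ∃ C : ℝ, 0 ≤ C ∧ ∀ a b : ℝ, 0 ≤ a → 0 ≤ b →
      (a + b) ^ q ≤ (1 + ε) * a ^ q + C * b ^ q := by
  have h1 : 1 < (1 + ε) ^ (1 / q) :=
    (Real.one_lt_rpow_iff_of_pos (by positivity)).2 (Or.inl ⟨by linarith, by positivity⟩)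
  set δ : ℝ := (1 + ε) ^ (1 / q) - 1 with hδdef
  have hδ : 0 < δ := by simp only [hδdef]; linarith
  have h1δ : (1 + δ) ^ q = 1 + ε := by
    have : 1 + δ = (1 + ε) ^ (1 / q) := by simp [hδdef]
    rw [this, ← Real.rpow_mul (by positivity), one_div_mul_cancel hq.ne', Real.rpow_one]
  refine ⟨((1 + δ) / δ) ^ q, Real.rpow_nonneg (by positivity) _, fun a b ha hb => ?_⟩
  rcases le_or_gt b (δ * a) with h | h
  · have hab : a + b ≤ (1 + δ) * a := by nlinarith
    calc (a + b) ^ q ≤ ((1 + δ) * a) ^ q := Real.rpow_le_rpow (by positivity) hab hq.le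
      _ = (1 + δ) ^ q * a ^ q := Real.mul_rpow (by positivity) ha
      _ = (1 + ε) * a ^ q := by rw [h1δ]
      _ ≤ _ := le_add_of_nonneg_right
          (mul_nonneg (Real.rpow_nonneg (by positivity) _) (Real.rpow_nonneg hb _))
  · have hab : a + b ≤ ((1 + δ) / δ) * b := by
      rw [div_mul_eq_mul_div, le_div_iff₀ hδ]; nlinarith
    calc (a + b) ^ q ≤ (((1 + δ) / δ) * b) ^ q := Real.rpow_le_rpow (by positivity) hab hq.le
      _ = ((1 + δ) / δ) ^ q * b ^ q := Real.mul_rpow (by positivity) hb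
      _ ≤ _ := le_add_of_nonneg_left
          (mul_nonneg (by linarith) (Real.rpow_nonneg ha _))

/-- `limsup (c * B + k) ≤ c * limsup B + k` in `ℝ≥0∞` for `c ≠ ⊤`. -/
lemma tail_limsup_eq_limsup_affine_le {B : ℕ → ℝ≥0∞} {c k : ℝ≥0∞} (hc : c ≠ ⊤) :
    limsup (fun n => c * B n + k) atTop ≤ c * limsup B atTop + k := by
  by_cases hc0 : c = 0
  · simp [hc0, limsup_const]
  set M := limsup B atTop with hM
  rcases eq_or_ne M ⊤ with hMtop | hMtop
  · rw [hMtop, ENNReal.mul_top hc0]; exact le_top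
  refine ENNReal.le_of_forall_pos_le_add fun η hη hlt => ?_
  have hη' : (η : ℝ≥0∞) / c ≠ 0 := by
    simp [ENNReal.div_eq_zero_iff, hc, hη.ne']
  have hb : M < M + (η : ℝ≥0∞) / c := ENNReal.lt_add_right hMtop hη'
  have hev : ∀ᶠ n in atTop, B n < M + (η : ℝ≥0∞) / c := eventually_lt_of_limsup_lt hb
  have h1 : limsup (fun n => c * B n + k) atTop ≤ c * (M + (η : ℝ≥0∞) / c) + k := by
    refine limsup_le_of_le (by isBoundedDefault) (hev.mono fun n hn => ?_)
    exact add_le_add_left (mul_le_mul_right hn.le c) k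
  have h2 : c * (M + (η : ℝ≥0∞) / c) + k = (c * M + k) + η := by
    rw [mul_add, ENNReal.mul_div_cancel hc0 hc]; ring
  rw [h2] at h1; exact h1

/-- Integral form of the power inequality. -/
lemma tail_limsup_eq_aux_bound {α : Type*} [MeasurableSpace α] {μ : Measure α} {q : ℝ}
    (hq : 0 < q) {ε C : ℝ} (hε : 0 < ε) (hC : 0 ≤ C)
    (hpt : ∀ a b : ℝ, 0 ≤ a → 0 ≤ b → (a + b) ^ q ≤ (1 + ε) * a ^ q + C * b ^ q)
    (v w W : α → ℝ) (hvw : ∀ x, |v x| ≤ |w x| + |W x|)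
    (hw : AEMeasurable (fun x => ENNReal.ofReal (|w x| ^ q)) μ) :
    ∫⁻ x, ENNReal.ofReal (|v x| ^ q) ∂μ ≤
      ENNReal.ofReal (1 + ε) * ∫⁻ x, ENNReal.ofReal (|w x| ^ q) ∂μ +
      ENNReal.ofReal C * ∫⁻ x, ENNReal.ofReal (|W x| ^ q) ∂μ := by
  have step : ∀ x, ENNReal.ofReal (|v x| ^ q) ≤
      ENNReal.ofReal (1 + ε) * ENNReal.ofReal (|w x| ^ q)
        + ENNReal.ofReal C * ENNReal.ofReal (|W x| ^ q) := by
    intro x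
    have h1 : |v x| ^ q ≤ (1 + ε) * |w x| ^ q + C * |W x| ^ q :=
      le_trans (Real.rpow_le_rpow (abs_nonneg _) (hvw x) hq.le)
        (hpt _ _ (abs_nonneg _) (abs_nonneg _))
    calc ENNReal.ofReal (|v x| ^ q)
        ≤ ENNReal.ofReal ((1 + ε) * |w x| ^ q + C * |W x| ^ q) := ENNReal.ofReal_le_ofReal h1
      _ = _ := by
          rw [ENNReal.ofReal_add (mul_nonneg (by linarith) (Real.rpow_nonneg (abs_nonneg _) _))
            (mul_nonneg hC (Real.rpow_nonneg (abs_nonneg _) _)),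
            ENNReal.ofReal_mul (by linarith), ENNReal.ofReal_mul hC]
  calc ∫⁻ x, ENNReal.ofReal (|v x| ^ q) ∂μ
      ≤ ∫⁻ x, (ENNReal.ofReal (1 + ε) * ENNReal.ofReal (|w x| ^ q)
          + ENNReal.ofReal C * ENNReal.ofReal (|W x| ^ q)) ∂μ := lintegral_mono step
    _ = _ := by
        rw [lintegral_add_left' (hw.const_mul _),
          lintegral_const_mul' _ _ ENNReal.ofReal_ne_top,
          lintegral_const_mul' _ _ ENNReal.ofReal_ne_top]

/-- If `a ≤ (1+ε) b` for every `ε > 0` and `b ≠ ⊤`, then `a ≤ b`. -/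
lemma tail_limsup_eq_le_of_forall {a b : ℝ≥0∞} (hb : b ≠ ⊤)
    (h : ∀ ε : ℝ, 0 < ε → a ≤ ENNReal.ofReal (1 + ε) * b) : a ≤ b := by
  refine ENNReal.le_of_forall_pos_le_add fun η hη _ => ?_
  by_cases hb0 : b = 0
  · simpa [hb0] using (h 1 one_pos).trans (by simp [hb0])
  have hbR : 0 < b.toReal := ENNReal.toReal_pos hb0 hb
  set ε : ℝ := (η : ℝ) / b.toReal with hεdef
  have hε : 0 < ε := div_pos (by exact_mod_cast hη) hbR
  calc a ≤ ENNReal.ofReal (1 + ε) * b := h ε hε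
    _ = (1 + ENNReal.ofReal ε) * b := by
        rw [ENNReal.ofReal_add zero_le_one hε.le, ENNReal.ofReal_one]
    _ = b + ENNReal.ofReal ε * b := by ring
    _ ≤ b + η := by
        gcongr
        have h1 : ENNReal.ofReal ε * b = ENNReal.ofReal (ε * b.toReal) := by
          rw [ENNReal.ofReal_mul hε.le, ENNReal.ofReal_toReal hb]
        rw [h1, hεdef, div_mul_cancel₀ _ hbR.ne']
        simp [ENNReal.ofReal_coe_nnreal]

/-- Limit comparison lemma. -/
lemma tail_limsup_eq_inf_aux {F G T : ℝ → ℝ≥0∞} (hGanti : Antitone G)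
    (hT : Tendsto T atTop (𝓝 0)) (hGtop : (⨅ R, G R) ≠ ⊤)
    (h : ∀ ε : ℝ, 0 < ε → ∃ C : ℝ≥0∞, C ≠ ⊤ ∧
      ∀ R, F R ≤ ENNReal.ofReal (1 + ε) * G R + C * T R) :
    (⨅ R, F R) ≤ ⨅ R, G R := by
  have hG : Tendsto G atTop (𝓝 (⨅ R, G R)) := tendsto_atTop_iInf hGanti
  refine tail_limsup_eq_le_of_forall hGtop fun ε hε => ?_
  obtain ⟨C, hC, hFC⟩ := h ε hε
  have htend : Tendsto (fun R => ENNReal.ofReal (1 + ε) * G R + C * T R) atTop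
      (𝓝 (ENNReal.ofReal (1 + ε) * (⨅ R, G R) + C * 0)) :=
    (ENNReal.Tendsto.const_mul hG (Or.inr ENNReal.ofReal_ne_top)).add
      (ENNReal.Tendsto.const_mul hT (Or.inr hC))
  rw [mul_zero, add_zero] at htend
  exact ge_of_tendsto htend (Eventually.of_forall fun R => (iInf_le F R).trans (hFC R))

/-- If `(u n)` is bounded in `L^q(ℝ^N)` and converges a.e. to `u`, then `u ∈ L^q`, the
functions `R ↦ limsup_n ∫_{‖x‖ ≥ R} |u n|^q` and `R ↦ limsup_n ∫_{‖x‖ ≥ R} |u n − u|^q`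
both converge as `R → ∞`, and their limits coincide. -/
theorem tail_limsup_eq (N : ℕ) (hN : 1 ≤ N) (q : ℝ) (hq : 0 < q)
    (u : ℕ → EuclideanSpace ℝ (Fin N) → ℝ) (U : EuclideanSpace ℝ (Fin N) → ℝ)
    (hmeas : ∀ n, Measurable (u n))
    (hbdd : ∃ C : ℝ≥0∞, C ≠ ⊤ ∧ ∀ n, ∫⁻ x, ENNReal.ofReal (|u n x| ^ q) ≤ C)
    (hae : ∀ᵐ x, Tendsto (fun n => u n x) atTop (𝓝 (U x))) :
    (∫⁻ x, ENNReal.ofReal (|U x| ^ q)) ≠ ⊤ ∧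
    ∃ L : ℝ≥0∞,
      Tendsto (fun R : ℝ =>
          limsup (fun n => ∫⁻ x in {x | R ≤ ‖x‖}, ENNReal.ofReal (|u n x| ^ q)) atTop)
        atTop (𝓝 L) ∧
      Tendsto (fun R : ℝ =>
          limsup (fun n => ∫⁻ x in {x | R ≤ ‖x‖}, ENNReal.ofReal (|u n x - U x| ^ q)) atTop)
        atTop (𝓝 L) := by
  obtain ⟨C0, hC0top, hC0⟩ := hbdd
  have hUae : AEMeasurable U := aemeasurable_of_tendsto_metrizable_ae'
    (fun n => (hmeas n).aemeasurable) hae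
  have hφ : Measurable (fun t : ℝ => ENNReal.ofReal (|t| ^ q)) :=
    ENNReal.measurable_ofReal.comp (measurable_id.abs.pow_const q)
  have hφcont : Continuous (fun t : ℝ => ENNReal.ofReal (|t| ^ q)) :=
    ENNReal.continuous_ofReal.comp (continuous_abs.rpow_const (fun x => Or.inr hq.le))
  have hfn : ∀ n, Measurable fun x => ENNReal.ofReal (|u n x| ^ q) :=
    fun n => hφ.comp (hmeas n)
  have hgn : ∀ n, AEMeasurable fun x => ENNReal.ofReal (|u n x - U x| ^ q) :=
    fun n => hφ.comp_aemeasurable ((hmeas n).aemeasurable.sub hUae)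
  have hfU : AEMeasurable fun x => ENNReal.ofReal (|U x| ^ q) := hφ.comp_aemeasurable hUae
  -- part 1 : U ∈ L^q
  have hUpt : ∀ᵐ x, ENNReal.ofReal (|U x| ^ q)
      = liminf (fun n => ENNReal.ofReal (|u n x| ^ q)) atTop :=
    hae.mono fun x hx => ((hφcont.tendsto _).comp hx).liminf_eq.symm
  have hUint : (∫⁻ x, ENNReal.ofReal (|U x| ^ q)) ≤ C0 := by
    calc (∫⁻ x, ENNReal.ofReal (|U x| ^ q))
        = ∫⁻ x, liminf (fun n => ENNReal.ofReal (|u n x| ^ q)) atTop := lintegral_congr_ae hUpt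
      _ ≤ liminf (fun n => ∫⁻ x, ENNReal.ofReal (|u n x| ^ q)) atTop := lintegral_liminf_le hfn
      _ ≤ liminf (fun _ : ℕ => C0) atTop := liminf_le_liminf (Eventually.of_forall hC0)
      _ = C0 := liminf_const _
  have hUtop : (∫⁻ x, ENNReal.ofReal (|U x| ^ q)) ≠ ⊤ := (hUint.trans_lt hC0top.lt_top).ne
  refine ⟨hUtop, ?_⟩
  -- sets and tail integrals
  set S : ℝ → Set (EuclideanSpace ℝ (Fin N)) := fun R => {x | R ≤ ‖x‖} with hS
  have hSmeas : ∀ R, MeasurableSet (S R) := fun R =>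
    measurableSet_le measurable_const measurable_norm
  have hSanti : Antitone S := fun R₁ R₂ h x hx => le_trans h hx
  set T : ℝ → ℝ≥0∞ := fun R => ∫⁻ x in S R, ENNReal.ofReal (|U x| ^ q) with hT
  have hTto : Tendsto T atTop (𝓝 0) := by
    set ν := volume.withDensity (fun x => ENNReal.ofReal (|U x| ^ q)) with hν
    have h1 : ∀ R, T R = ν (S R) := fun R => (withDensity_apply _ (hSmeas R)).symm
    have h2 : Tendsto (fun R => ν (S R)) atTop (𝓝 (ν (⋂ R, S R))) := by
      refine tendsto_measure_iInter_atTop (fun R => (hSmeas R).nullMeasurableSet) hSanti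
        ⟨0, ?_⟩
      rw [← h1]
      exact ((setLIntegral_le_lintegral _ _).trans hUint).trans_lt hC0top.lt_top |>.ne
    have h3 : (⋂ R, S R) = ∅ := by
      ext x
      simp only [Set.mem_iInter, Set.mem_empty_iff_false, iff_false, not_forall, hS,
        Set.mem_setOf_eq, not_le]
      exact ⟨‖x‖ + 1, by linarith⟩
    rw [h3, measure_empty] at h2
    simpa only [← h1] using h2
  set F : ℝ → ℝ≥0∞ := fun R =>
    limsup (fun n => ∫⁻ x in S R, ENNReal.ofReal (|u n x| ^ q)) atTop with hF
  set G : ℝ → ℝ≥0∞ := fun R =>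
    limsup (fun n => ∫⁻ x in S R, ENNReal.ofReal (|u n x - U x| ^ q)) atTop with hG
  have hFanti : Antitone F := fun R₁ R₂ h =>
    limsup_le_limsup (Eventually.of_forall fun n => lintegral_mono_set (hSanti h))
  have hGanti : Antitone G := fun R₁ R₂ h =>
    limsup_le_limsup (Eventually.of_forall fun n => lintegral_mono_set (hSanti h))
  have hFto : Tendsto F atTop (𝓝 (⨅ R, F R)) := tendsto_atTop_iInf hFanti
  have hGto : Tendsto G atTop (𝓝 (⨅ R, G R)) := tendsto_atTop_iInf hGanti
  -- estimates
  have habs1 : ∀ n x, |u n x| ≤ |u n x - U x| + |U x| := fun n x => by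
    have := abs_add_le (u n x - U x) (U x); simpa using this
  have habs2 : ∀ n x, |u n x - U x| ≤ |u n x| + |U x| := fun n x => by
    have := abs_add_le (u n x) (-U x); simpa [sub_eq_add_neg] using this
  have hest1 : ∀ ε : ℝ, 0 < ε → ∃ C : ℝ≥0∞, C ≠ ⊤ ∧
      ∀ R, F R ≤ ENNReal.ofReal (1 + ε) * G R + C * T R := by
    intro ε hε
    obtain ⟨C₁, hC₁, hpt⟩ := tail_limsup_eq_pow_ineq hq hε
    refine ⟨ENNReal.ofReal C₁, ENNReal.ofReal_ne_top, fun R => ?_⟩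
    have hn : ∀ n, (∫⁻ x in S R, ENNReal.ofReal (|u n x| ^ q)) ≤
        ENNReal.ofReal (1 + ε) * (∫⁻ x in S R, ENNReal.ofReal (|u n x - U x| ^ q))
          + ENNReal.ofReal C₁ * T R :=
      fun n => tail_limsup_eq_aux_bound hq hε hC₁ hpt (u n) (fun x => u n x - U x) U
        (habs1 n) ((hgn n).restrict)
    calc F R ≤ limsup (fun n => ENNReal.ofReal (1 + ε) *
          (∫⁻ x in S R, ENNReal.ofReal (|u n x - U x| ^ q)) + ENNReal.ofReal C₁ * T R) atTop :=
        limsup_le_limsup (Eventually.of_forall hn)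
      _ ≤ _ := tail_limsup_eq_limsup_affine_le ENNReal.ofReal_ne_top
  have hest2 : ∀ ε : ℝ, 0 < ε → ∃ C : ℝ≥0∞, C ≠ ⊤ ∧
      ∀ R, G R ≤ ENNReal.ofReal (1 + ε) * F R + C * T R := by
    intro ε hε
    obtain ⟨C₁, hC₁, hpt⟩ := tail_limsup_eq_pow_ineq hq hε
    refine ⟨ENNReal.ofReal C₁, ENNReal.ofReal_ne_top, fun R => ?_⟩
    have hn : ∀ n, (∫⁻ x in S R, ENNReal.ofReal (|u n x - U x| ^ q)) ≤
        ENNReal.ofReal (1 + ε) * (∫⁻ x in S R, ENNReal.ofReal (|u n x| ^ q))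
          + ENNReal.ofReal C₁ * T R :=
      fun n => tail_limsup_eq_aux_bound hq hε hC₁ hpt (fun x => u n x - U x) (u n) U
        (habs2 n) ((hfn n).aemeasurable.restrict)
    calc G R ≤ limsup (fun n => ENNReal.ofReal (1 + ε) *
          (∫⁻ x in S R, ENNReal.ofReal (|u n x| ^ q)) + ENNReal.ofReal C₁ * T R) atTop :=
        limsup_le_limsup (Eventually.of_forall hn)
      _ ≤ _ := tail_limsup_eq_limsup_affine_le ENNReal.ofReal_ne_top
  -- finiteness of the infima
  have hFbd : (⨅ R, F R) ≠ ⊤ := by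
    have : F 0 ≤ C0 := by
      refine limsup_le_of_le (by isBoundedDefault) (Eventually.of_forall fun n => ?_)
      exact (setLIntegral_le_lintegral _ _).trans (hC0 n)
    exact (lt_of_le_of_lt ((iInf_le F 0).trans this) hC0top.lt_top).ne
  have hGbd : (⨅ R, G R) ≠ ⊤ := by
    obtain ⟨C, hCtop, hCb⟩ := hest2 1 one_pos
    have : G 0 ≤ ENNReal.ofReal (1 + 1) * F 0 + C * T 0 := hCb 0
    have hF0 : F 0 ≤ C0 := by
      refine limsup_le_of_le (by isBoundedDefault) (Eventually.of_forall fun n => ?_)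
      exact (setLIntegral_le_lintegral _ _).trans (hC0 n)
    have hT0 : T 0 ≤ ∫⁻ x, ENNReal.ofReal (|U x| ^ q) := setLIntegral_le_lintegral _ _
    have hfin : ENNReal.ofReal (1 + 1) * F 0 + C * T 0 < ⊤ := by
      apply ENNReal.add_lt_top.2
      constructor
      · exact ENNReal.mul_lt_top ENNReal.ofReal_lt_top (hF0.trans_lt hC0top.lt_top)
      · exact ENNReal.mul_lt_top hCtop.lt_top (hT0.trans_lt hUtop.lt_top)
    exact (lt_of_le_of_lt ((iInf_le G 0).trans this) hfin).ne
  have h12 : (⨅ R, F R) ≤ ⨅ R, G R := tail_limsup_eq_inf_aux hGanti hTto hGbd hest1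
  have h21 : (⨅ R, G R) ≤ ⨅ R, F R := tail_limsup_eq_inf_aux hFanti hTto hFbd hest2
  have heq : (⨅ R, G R) = ⨅ R, F R := le_antisymm h21 h12
  exact ⟨⨅ R, F R, hFto, heq ▸ hGto⟩
end

section
/- Let N ≥ 1 and 0 < p < ∞. Let Φ : ℝ^N → ℝ be a bounded continuously differentiable function whose gradient ∇Φ has compact support K. Let (v_n) be a sequence of differentiable functions ℝ^N → ℝ such that sup_n ∫_{ℝ^N} ‖∇v_n‖^p dx < ∞ and ∫_K |v_n|^p dx → 0 as n → ∞. Then ∫_{ℝ^N} ‖∇(v_n Φ)‖^p dx − ∫_{ℝ^N} ‖∇v_n‖^p |Φ|^p dx → 0 as n → ∞. -/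
open MeasureTheory Filter Topology
open scoped ENNReal

lemma key_rpow (p : ℝ) (hp : 0 < p) {δ : ℝ} (hδ : 0 < δ) :
    ∃ C : ℝ, 0 < C ∧ ∀ s t u : ℝ, 0 ≤ s → 0 ≤ t → 0 ≤ u → |s - t| ≤ u →
      |s ^ p - t ^ p| ≤ δ * t ^ p + C * u ^ p := by
  have hc1 : Tendsto (fun e : ℝ => (1 + e) ^ p) (𝓝 0) (𝓝 1) := by
    have : ContinuousAt (fun e : ℝ => (1 + e) ^ p) 0 :=
      (continuousAt_const.add continuousAt_id).rpow_const (Or.inl (by norm_num))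
    simpa [ContinuousAt] using this
  have hc2 : Tendsto (fun e : ℝ => (1 - e) ^ p) (𝓝 0) (𝓝 1) := by
    have : ContinuousAt (fun e : ℝ => (1 - e) ^ p) 0 :=
      (continuousAt_const.sub continuousAt_id).rpow_const (Or.inl (by norm_num))
    simpa [ContinuousAt] using this
  have h1 : ∀ᶠ e in 𝓝 (0 : ℝ), (1 + e) ^ p < 1 + δ :=
    hc1.eventually_lt_const (by linarith)
  have h2 : ∀ᶠ e in 𝓝 (0 : ℝ), 1 - δ < (1 - e) ^ p :=
    hc2.eventually_const_lt (by linarith)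
  have h3 : ∀ᶠ e in 𝓝 (0 : ℝ), e < 1 := eventually_lt_nhds zero_lt_one
  have hall : ∀ᶠ e in 𝓝[>] (0 : ℝ),
      ((1 + e) ^ p < 1 + δ ∧ 1 - δ < (1 - e) ^ p ∧ e < 1) ∧ 0 < e :=
    (((h1.and (h2.and h3)).filter_mono nhdsWithin_le_nhds).and
      (eventually_mem_nhdsWithin.mono fun e he => he))
  obtain ⟨ε, ⟨hε1, hε2, hε3⟩, hε0⟩ := hall.exists
  refine ⟨max ((1 + ε⁻¹) ^ p) ((ε⁻¹) ^ p),
    lt_max_of_lt_right (Real.rpow_pos_of_pos (by positivity) p), ?_⟩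
  set C := max ((1 + ε⁻¹) ^ p) ((ε⁻¹) ^ p) with hC
  intro s t u hs ht hu hst
  have htp : (0:ℝ) ≤ t ^ p := Real.rpow_nonneg ht p
  have hsp : (0:ℝ) ≤ s ^ p := Real.rpow_nonneg hs p
  have hup : (0:ℝ) ≤ u ^ p := Real.rpow_nonneg hu p
  have hC0 : (0:ℝ) ≤ C := le_max_of_le_right (Real.rpow_nonneg (by positivity) p)
  have hδt : (0:ℝ) ≤ δ * t ^ p := by positivity
  have hCu : (0:ℝ) ≤ C * u ^ p := mul_nonneg hC0 hup
  rw [abs_sub_le_iff]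
  obtain ⟨hsu, hts⟩ := abs_sub_le_iff.mp hst
  constructor
  · rcases le_or_gt s t with h | h
    · have : s ^ p ≤ t ^ p := Real.rpow_le_rpow hs h hp.le
      linarith
    rcases le_or_gt u (ε * t) with hc | hc
    · have hst' : s ≤ (1 + ε) * t := by nlinarith
      have : s ^ p ≤ (1 + ε) ^ p * t ^ p := by
        rw [← Real.mul_rpow (by linarith) ht]
        exact Real.rpow_le_rpow hs hst' hp.le
      have h2' : (1 + ε) ^ p * t ^ p ≤ (1 + δ) * t ^ p :=
        mul_le_mul_of_nonneg_right hε1.le htp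
      nlinarith
    · have hsu' : s ≤ (1 + ε⁻¹) * u := by
        have htu : t ≤ ε⁻¹ * u := by
          rw [← mul_le_mul_iff_right₀ hε0]
          calc ε * t ≤ u := hc.le
          _ = ε * (ε⁻¹ * u) := by field_simp
        nlinarith
      have : s ^ p ≤ (1 + ε⁻¹) ^ p * u ^ p := by
        rw [← Real.mul_rpow (by positivity) hu]
        exact Real.rpow_le_rpow hs hsu' hp.le
      have h2' : (1 + ε⁻¹) ^ p * u ^ p ≤ C * u ^ p :=
        mul_le_mul_of_nonneg_right (le_max_left _ _) hup
      linarith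
  · rcases le_or_gt t s with h | h
    · have : t ^ p ≤ s ^ p := Real.rpow_le_rpow ht h hp.le
      linarith
    rcases le_or_gt u (ε * t) with hc | hc
    · have hst' : (1 - ε) * t ≤ s := by nlinarith
      have h1' : (1 - ε) ^ p * t ^ p ≤ s ^ p := by
        rw [← Real.mul_rpow (by linarith) ht]
        exact Real.rpow_le_rpow (by nlinarith) hst' hp.le
      have h2' : (1 - δ) * t ^ p ≤ (1 - ε) ^ p * t ^ p :=
        mul_le_mul_of_nonneg_right hε2.le htp
      nlinarith
    · have htu : t ≤ ε⁻¹ * u := by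
        rw [← mul_le_mul_iff_right₀ hε0]
        calc ε * t ≤ u := hc.le
        _ = ε * (ε⁻¹ * u) := by field_simp
      have : t ^ p ≤ (ε⁻¹) ^ p * u ^ p := by
        rw [← Real.mul_rpow (by positivity) hu]
        exact Real.rpow_le_rpow ht htu hp.le
      have h2' : (ε⁻¹) ^ p * u ^ p ≤ C * u ^ p :=
        mul_le_mul_of_nonneg_right (le_max_right _ _) hup
      linarith

lemma gradient_mul' {F : Type*} [NormedAddCommGroup F] [InnerProductSpace ℝ F]
    [CompleteSpace F] {f g : F → ℝ} {x : F} (hf : DifferentiableAt ℝ f x)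
    (hg : DifferentiableAt ℝ g x) :
    gradient (fun y => f y * g y) x = f x • gradient g x + g x • gradient f x := by
  unfold gradient
  rw [fderiv_fun_mul hf hg, map_add, LinearIsometryEquiv.map_smul, LinearIsometryEquiv.map_smul]

/-- If `Φ` is a bounded `C¹` function whose gradient is supported in the compact set `K`,
and `(v n)` is a sequence of differentiable functions with uniformly bounded gradient
`p`-energy such that `∫_K |v n|^p → 0`, then
`∫ ‖∇(v n Φ)‖^p − ∫ ‖∇ v n‖^p |Φ|^p → 0`. -/
theorem grad_cutoff_energy_diff_tendsto_zero (N : ℕ) (hN : 1 ≤ N) (p : ℝ) (hp : 0 < p)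
    (Φ : EuclideanSpace ℝ (Fin N) → ℝ) (K : Set (EuclideanSpace ℝ (Fin N)))
    (hΦ : ContDiff ℝ 1 Φ) (hΦbdd : ∃ M : ℝ, ∀ x, |Φ x| ≤ M)
    (hK : IsCompact K) (hgradsupp : ∀ x ∉ K, gradient Φ x = 0)
    (v : ℕ → EuclideanSpace ℝ (Fin N) → ℝ) (hv : ∀ n, Differentiable ℝ (v n))
    (hbdd : ∃ C : ℝ≥0∞, C ≠ ⊤ ∧ ∀ n, ∫⁻ x, ENNReal.ofReal (‖gradient (v n) x‖ ^ p) ≤ C)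
    (hvK : Tendsto (fun n => ∫⁻ x in K, ENNReal.ofReal (|v n x| ^ p)) atTop (𝓝 0)) :
    Tendsto (fun n =>
        (∫⁻ x, ENNReal.ofReal (‖gradient (fun y => v n y * Φ y) x‖ ^ p)).toReal -
        (∫⁻ x, ENNReal.ofReal (‖gradient (v n) x‖ ^ p * |Φ x| ^ p)).toReal)
      atTop (𝓝 0) := by
  classical
  borelize (EuclideanSpace ℝ (Fin N) →L[ℝ] ℝ)
  obtain ⟨M, hM⟩ := hΦbdd
  have hM0 : 0 ≤ M := le_trans (abs_nonneg _) (hM 0)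
  obtain ⟨C0, hC0top, hC0⟩ := hbdd
  have hΦd : Differentiable ℝ Φ := hΦ.differentiable one_ne_zero
  have hrpow_cont : Continuous (fun x : ℝ => x ^ p) :=
    continuous_iff_continuousAt.mpr fun x => Real.continuousAt_rpow_const x p (Or.inr hp.le)
  have hgradΦcont : Continuous (gradient Φ) := by
    have h1 : Continuous (fderiv ℝ Φ) := hΦ.continuous_fderiv one_ne_zero
    exact (InnerProductSpace.toDual ℝ (EuclideanSpace ℝ (Fin N))).symm.continuous.comp h1
  have hmeasg : ∀ n, Measurable (gradient (v n)) := fun n =>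
    ((InnerProductSpace.toDual ℝ (EuclideanSpace ℝ (Fin N))).symm.continuous.measurable).comp
      (measurable_fderiv ℝ (v n))
  -- global bound on the gradient of Φ
  obtain ⟨L0, hL0⟩ := hK.exists_bound_of_continuousOn hgradΦcont.continuousOn
  set L : ℝ := max L0 0 with hLdef
  have hL0' : (0:ℝ) ≤ L := le_max_right _ _
  have hL : ∀ x, ‖gradient Φ x‖ ≤ L := by
    intro x
    by_cases hx : x ∈ K
    · exact (hL0 x hx).trans (le_max_left _ _)
    · rw [hgradsupp x hx, norm_zero]; exact hL0'
  set A := fun n => ∫⁻ x, ENNReal.ofReal (‖gradient (fun y => v n y * Φ y) x‖ ^ p) with hAdef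
  set B := fun n => ∫⁻ x, ENNReal.ofReal (‖gradient (v n) x‖ ^ p * |Φ x| ^ p) with hBdef
  set U := fun n => ∫⁻ x, ENNReal.ofReal ((|v n x| * ‖gradient Φ x‖) ^ p) with hUdef
  -- (i) B is uniformly bounded
  have hBle : ∀ n, B n ≤ ENNReal.ofReal (M ^ p) * C0 := by
    intro n
    calc B n ≤ ∫⁻ x, ENNReal.ofReal (M ^ p) * ENNReal.ofReal (‖gradient (v n) x‖ ^ p) := by
          apply lintegral_mono; intro x
          dsimp only
          rw [← ENNReal.ofReal_mul (Real.rpow_nonneg hM0 p)]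
          apply ENNReal.ofReal_le_ofReal
          rw [mul_comm (M ^ p)]
          exact mul_le_mul_of_nonneg_left
            (Real.rpow_le_rpow (abs_nonneg _) (hM x) hp.le)
            (Real.rpow_nonneg (norm_nonneg _) p)
      _ = ENNReal.ofReal (M ^ p) * ∫⁻ x, ENNReal.ofReal (‖gradient (v n) x‖ ^ p) :=
          lintegral_const_mul' _ _ ENNReal.ofReal_ne_top
      _ ≤ _ := mul_le_mul_right (hC0 n) _
  -- (ii) U tends to zero
  have hUle : ∀ n, U n ≤ ENNReal.ofReal (L ^ p) * ∫⁻ x in K, ENNReal.ofReal (|v n x| ^ p) := by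
    intro n
    calc U n = ∫⁻ x, K.indicator
          (fun x => ENNReal.ofReal ((|v n x| * ‖gradient Φ x‖) ^ p)) x := by
          apply lintegral_congr; intro x
          by_cases hx : x ∈ K
          · rw [Set.indicator_of_mem hx]
          · rw [Set.indicator_of_notMem hx, hgradsupp x hx]
            simp [Real.zero_rpow hp.ne']
      _ = ∫⁻ x in K, ENNReal.ofReal ((|v n x| * ‖gradient Φ x‖) ^ p) :=
          lintegral_indicator hK.measurableSet _
      _ ≤ ∫⁻ x in K, ENNReal.ofReal (L ^ p) * ENNReal.ofReal (|v n x| ^ p) := by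
          apply lintegral_mono; intro x
          dsimp only
          rw [← ENNReal.ofReal_mul (Real.rpow_nonneg hL0' p),
            ← Real.mul_rpow hL0' (abs_nonneg _)]
          apply ENNReal.ofReal_le_ofReal
          apply Real.rpow_le_rpow (by positivity) ?_ hp.le
          rw [mul_comm (|v n x|)]
          exact mul_le_mul_of_nonneg_right (hL x) (abs_nonneg _)
      _ = ENNReal.ofReal (L ^ p) * ∫⁻ x in K, ENNReal.ofReal (|v n x| ^ p) :=
          lintegral_const_mul' _ _ ENNReal.ofReal_ne_top
  have hUlim : Tendsto U atTop (𝓝 0) := by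
    have hlim2 : Tendsto
        (fun n => ENNReal.ofReal (L ^ p) * ∫⁻ x in K, ENNReal.ofReal (|v n x| ^ p))
        atTop (𝓝 0) := by
      have := ENNReal.Tendsto.const_mul (a := ENNReal.ofReal (L ^ p)) hvK (Or.inr ENNReal.ofReal_ne_top)
      simpa using this
    exact tendsto_of_tendsto_of_tendsto_of_le_of_le tendsto_const_nhds hlim2
      (fun n => zero_le) hUle
  -- (iii) main estimate
  have hmain : ∀ δ : ℝ, 0 < δ → ∃ C : ℝ, 0 < C ∧ ∀ n,
      A n ≤ B n + (ENNReal.ofReal δ * B n + ENNReal.ofReal C * U n) ∧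
      B n ≤ A n + (ENNReal.ofReal δ * B n + ENNReal.ofReal C * U n) := by
    intro δ hδ
    obtain ⟨C, hCpos, hkey⟩ := key_rpow p hp hδ
    refine ⟨C, hCpos, fun n => ?_⟩
    set m0 := fun x => ENNReal.ofReal
      (‖v n x • gradient Φ x + Φ x • gradient (v n) x‖ ^ p) with hm0def
    set m1 := fun x => ENNReal.ofReal ((|Φ x| * ‖gradient (v n) x‖) ^ p) with hm1def
    set m2 := fun x => ENNReal.ofReal (δ * (|Φ x| * ‖gradient (v n) x‖) ^ p) with hm2def
    set m3 := fun x => ENNReal.ofReal (C * (|v n x| * ‖gradient Φ x‖) ^ p) with hm3def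
    have hm0 : Measurable m0 := by
      apply ENNReal.measurable_ofReal.comp
      apply (hrpow_cont.measurable).comp
      apply Measurable.norm
      exact (((hv n).continuous.measurable).smul hgradΦcont.measurable).add
        (hΦ.continuous.measurable.smul (hmeasg n))
    have hm1 : Measurable m1 := by
      apply ENNReal.measurable_ofReal.comp
      apply (hrpow_cont.measurable).comp
      exact (hΦ.continuous.abs.measurable).mul (hmeasg n).norm
    have hm2 : Measurable m2 := by
      apply ENNReal.measurable_ofReal.comp
      apply measurable_const.mul
      apply (hrpow_cont.measurable).comp
      exact (hΦ.continuous.abs.measurable).mul (hmeasg n).norm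
    have hm3 : Measurable m3 := by
      apply ENNReal.measurable_ofReal.comp
      apply measurable_const.mul
      apply (hrpow_cont.measurable).comp
      exact ((hv n).continuous.abs.measurable).mul hgradΦcont.norm.measurable
    -- pointwise estimates
    have hpt : ∀ x, m0 x ≤ m1 x + (m2 x + m3 x) ∧ m1 x ≤ m0 x + (m2 x + m3 x) := by
      intro x
      set s := ‖v n x • gradient Φ x + Φ x • gradient (v n) x‖ with hsdef
      set t := |Φ x| * ‖gradient (v n) x‖ with htdef
      set u := |v n x| * ‖gradient Φ x‖ with hudef
      have hs0 : 0 ≤ s := norm_nonneg _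
      have ht0 : 0 ≤ t := mul_nonneg (abs_nonneg _) (norm_nonneg _)
      have hu0 : 0 ≤ u := mul_nonneg (abs_nonneg _) (norm_nonneg _)
      have ht' : t = ‖Φ x • gradient (v n) x‖ := by
        rw [norm_smul, Real.norm_eq_abs]
      have hu' : u = ‖v n x • gradient Φ x‖ := by
        rw [norm_smul, Real.norm_eq_abs]
      have hst : |s - t| ≤ u := by
        rw [ht', hu', hsdef]
        have := abs_norm_sub_norm_le
          (v n x • gradient Φ x + Φ x • gradient (v n) x) (Φ x • gradient (v n) x)
        rwa [add_sub_cancel_right] at this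
      have hkey' := hkey s t u hs0 ht0 hu0 hst
      obtain ⟨hk1, hk2⟩ := abs_sub_le_iff.mp hkey'
      have htp : (0:ℝ) ≤ t ^ p := Real.rpow_nonneg ht0 p
      have hsp : (0:ℝ) ≤ s ^ p := Real.rpow_nonneg hs0 p
      have hup : (0:ℝ) ≤ u ^ p := Real.rpow_nonneg hu0 p
      have hδt : (0:ℝ) ≤ δ * t ^ p := mul_nonneg hδ.le htp
      have hCu : (0:ℝ) ≤ C * u ^ p := mul_nonneg hCpos.le hup
      constructor
      · calc m0 x = ENNReal.ofReal (s ^ p) := rfl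
          _ ≤ ENNReal.ofReal (t ^ p + (δ * t ^ p + C * u ^ p)) :=
            ENNReal.ofReal_le_ofReal (by linarith)
          _ = m1 x + (m2 x + m3 x) := by
            rw [ENNReal.ofReal_add htp (by linarith), ENNReal.ofReal_add hδt hCu]
      · calc m1 x = ENNReal.ofReal (t ^ p) := rfl
          _ ≤ ENNReal.ofReal (s ^ p + (δ * t ^ p + C * u ^ p)) :=
            ENNReal.ofReal_le_ofReal (by linarith)
          _ = m0 x + (m2 x + m3 x) := by
            rw [ENNReal.ofReal_add hsp (by linarith), ENNReal.ofReal_add hδt hCu]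
    -- identify the integrals
    have hA_eq : A n = ∫⁻ x, m0 x := by
      apply lintegral_congr; intro x
      rw [hm0def]
      congr 2
      rw [gradient_mul' (hv n x) (hΦd x)]
    have hB_eq : B n = ∫⁻ x, m1 x := by
      apply lintegral_congr; intro x
      rw [hm1def]
      congr 1
      rw [Real.mul_rpow (abs_nonneg _) (norm_nonneg _), mul_comm]
    have hi2 : ∫⁻ x, m2 x = ENNReal.ofReal δ * ∫⁻ x, m1 x := by
      calc ∫⁻ x, m2 x = ∫⁻ x, ENNReal.ofReal δ * m1 x := by
            apply lintegral_congr; intro x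
            simp only [hm2def, hm1def]
            rw [ENNReal.ofReal_mul hδ.le]
        _ = ENNReal.ofReal δ * ∫⁻ x, m1 x := lintegral_const_mul' _ _ ENNReal.ofReal_ne_top
    have hi3 : ∫⁻ x, m3 x = ENNReal.ofReal C * U n := by
      calc ∫⁻ x, m3 x
          = ∫⁻ x, ENNReal.ofReal C * ENNReal.ofReal ((|v n x| * ‖gradient Φ x‖) ^ p) := by
            apply lintegral_congr; intro x
            simp only [hm3def]
            rw [ENNReal.ofReal_mul hCpos.le]
        _ = ENNReal.ofReal C * U n := lintegral_const_mul' _ _ ENNReal.ofReal_ne_top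
    constructor
    · calc A n = ∫⁻ x, m0 x := hA_eq
        _ ≤ ∫⁻ x, (m1 x + (m2 x + m3 x)) := lintegral_mono fun x => (hpt x).1
        _ = (∫⁻ x, m1 x) + ((∫⁻ x, m2 x) + ∫⁻ x, m3 x) := by
            rw [lintegral_add_left hm1, lintegral_add_left hm2]
        _ = B n + (ENNReal.ofReal δ * B n + ENNReal.ofReal C * U n) := by
            rw [hi2, hi3, hB_eq]
    · calc B n = ∫⁻ x, m1 x := hB_eq
        _ ≤ ∫⁻ x, (m0 x + (m2 x + m3 x)) := lintegral_mono fun x => (hpt x).2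
        _ = (∫⁻ x, m0 x) + ((∫⁻ x, m2 x) + ∫⁻ x, m3 x) := by
            rw [lintegral_add_left hm0, lintegral_add_left hm2]
        _ = A n + (ENNReal.ofReal δ * B n + ENNReal.ofReal C * U n) := by
            rw [hi2, hi3, hA_eq, hB_eq]
  -- (iv) endgame
  rw [NormedAddCommGroup.tendsto_nhds_zero]
  intro ε hε
  set Bmax := ENNReal.ofReal (M ^ p) * C0 with hBmaxdef
  have hBmaxtop : Bmax ≠ ⊤ := ENNReal.mul_ne_top ENNReal.ofReal_ne_top hC0top
  set δ : ℝ := (ε / 2) / (Bmax.toReal + 1) with hδdef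
  have hBmaxtR : (0:ℝ) ≤ Bmax.toReal := ENNReal.toReal_nonneg
  have hδpos : 0 < δ := div_pos (half_pos hε) (by linarith)
  obtain ⟨C, hCpos, hACB⟩ := hmain δ hδpos
  have hδB : ENNReal.ofReal δ * Bmax < ENNReal.ofReal (ε / 2) := by
    rw [← ENNReal.ofReal_toReal hBmaxtop, ← ENNReal.ofReal_mul hδpos.le]
    apply ENNReal.ofReal_lt_ofReal_iff (half_pos hε) |>.mpr
    have : δ * (Bmax.toReal + 1) = ε / 2 := by
      rw [hδdef]; exact div_mul_cancel₀ _ (by linarith)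
    nlinarith
  have hUev : ∀ᶠ n in atTop, ENNReal.ofReal C * U n < ENNReal.ofReal (ε / 2) := by
    have hsmall : ∀ᶠ n in atTop, U n < ENNReal.ofReal ((ε / 2) / C) :=
      hUlim.eventually_lt_const (ENNReal.ofReal_pos.mpr (by positivity))
    filter_upwards [hsmall] with n hn
    calc ENNReal.ofReal C * U n < ENNReal.ofReal C * ENNReal.ofReal ((ε / 2) / C) := by
          refine ENNReal.mul_lt_mul_right (ENNReal.ofReal_pos.mpr hCpos).ne'
            ENNReal.ofReal_ne_top ?_
          exact hn
      _ = ENNReal.ofReal (ε / 2) := by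
          rw [← ENNReal.ofReal_mul hCpos.le, mul_div_cancel₀ _ hCpos.ne']
  filter_upwards [hUev] with n hn
  set E := ENNReal.ofReal δ * B n + ENNReal.ofReal C * U n with hEdef
  have hElt : E < ENNReal.ofReal ε := by
    calc E < ENNReal.ofReal (ε / 2) + ENNReal.ofReal (ε / 2) := by
          apply ENNReal.add_lt_add_of_le_of_lt ?_ ?_ hn
          · exact ne_top_of_lt (lt_of_le_of_lt (mul_le_mul_right (hBle n) _) hδB)
          · exact le_of_lt (lt_of_le_of_lt (mul_le_mul_right (hBle n) _) hδB)
      _ = ENNReal.ofReal ε := by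
          rw [← ENNReal.ofReal_add (half_pos hε).le (half_pos hε).le]
          norm_num
  have hEtop : E ≠ ⊤ := ne_top_of_lt (lt_of_lt_of_le hElt le_top)
  have hBtop : B n ≠ ⊤ := ne_top_of_lt (lt_of_le_of_lt (hBle n) (lt_top_iff_ne_top.mpr hBmaxtop))
  obtain ⟨hAle, hBle'⟩ := hACB n
  have hAtop : A n ≠ ⊤ := by
    apply ne_top_of_le_ne_top _ hAle
    exact ENNReal.add_ne_top.mpr ⟨hBtop, hEtop⟩
  have hABr : (A n).toReal - (B n).toReal ≤ E.toReal := by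
    have h1 : (A n).toReal ≤ (B n + E).toReal :=
      ENNReal.toReal_mono (ENNReal.add_ne_top.mpr ⟨hBtop, hEtop⟩) hAle
    rw [ENNReal.toReal_add hBtop hEtop] at h1
    linarith
  have hBAr : (B n).toReal - (A n).toReal ≤ E.toReal := by
    have h1 : (B n).toReal ≤ (A n + E).toReal :=
      ENNReal.toReal_mono (ENNReal.add_ne_top.mpr ⟨hAtop, hEtop⟩) hBle'
    rw [ENNReal.toReal_add hAtop hEtop] at h1
    linarith
  have hEr : E.toReal < ε := ENNReal.toReal_lt_of_lt_ofReal hElt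
  rw [Real.norm_eq_abs, abs_sub_lt_iff]
  constructor <;> linarith
end

section
/- Let N ≥ 1 and 0 < q < ∞. Let (u_n) be a sequence of measurable functions on ℝ^N with sup_n ∫_{ℝ^N} |u_n|^q dx < ∞ that converges Lebesgue-almost everywhere to a function u. Suppose ν is a finite Borel measure on ℝ^N such that ∫_{ℝ^N} φ |u_n − u|^q dx → ∫_{ℝ^N} φ dν for every continuous function φ : ℝ^N → ℝ vanishing at infinity, and set ν_∞ = lim_{R→∞} limsup_{n→∞} ∫_{{‖x‖ ≥ R}} |u_n − u|^q dx. Then limsup_{n→∞} ∫_{ℝ^N} |u_n|^q dx = ∫_{ℝ^N} |u|^q dx + ν(ℝ^N) + ν_∞. -/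
open MeasureTheory Filter Topology
open scoped ENNReal
open scoped NNReal

lemma aux_limsup_add {f g : ℕ → ℝ} {c : ℝ} (hf : Tendsto f atTop (𝓝 c))
    (hg : IsBoundedUnder (· ≤ ·) atTop g) (hg' : IsBoundedUnder (· ≥ ·) atTop g) :
    limsup (fun n => f n + g n) atTop = c + limsup g atTop := by
  refine le_antisymm ?_ ?_
  · have h := limsup_add_le (f := atTop) (u := f) (v := g) hf.isBoundedUnder_ge
      hf.isBoundedUnder_le hg'.isCoboundedUnder_le hg
    rw [hf.limsup_eq] at h
    exact h
  · have h := le_limsup_add (f := atTop) (u := g) (v := f) hg hg'.isCoboundedUnder_le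
      hf.isBoundedUnder_le hf.isBoundedUnder_ge
    rw [hf.liminf_eq] at h
    calc c + limsup g atTop = limsup g atTop + c := add_comm _ _
      _ ≤ limsup (g + f) atTop := h
      _ = limsup (fun n => f n + g n) atTop := by
          congr 1; funext n; exact add_comm (g n) (f n)

lemma aux_limsup_nonneg {g : ℕ → ℝ} {M : ℝ} (h0 : ∀ n, 0 ≤ g n) (hb : ∀ n, g n ≤ M) :
    0 ≤ limsup g atTop :=
  le_limsup_of_frequently_le (Frequently.of_forall h0) (isBoundedUnder_of ⟨M, hb⟩)

lemma aux_limsup_le {g : ℕ → ℝ} {M : ℝ} (h0 : ∀ n, 0 ≤ g n) (hb : ∀ n, g n ≤ M) :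
    limsup g atTop ≤ M :=
  limsup_le_of_le ((isBoundedUnder_of (r := (· ≥ ·)) ⟨0, h0⟩).isCoboundedUnder_le)
    (Eventually.of_forall hb)

lemma aux_limsup_ofReal {g : ℕ → ℝ} {M : ℝ} (h0 : ∀ n, 0 ≤ g n) (hb : ∀ n, g n ≤ M) :
    limsup (fun n => ENNReal.ofReal (g n)) atTop = ENNReal.ofReal (limsup g atTop) :=
  (Monotone.map_limsup_of_continuousAt (f := ENNReal.ofReal)
    (fun _ _ h => ENNReal.ofReal_le_ofReal h) g ENNReal.continuous_ofReal.continuousAt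
    (isBoundedUnder_of ⟨M, hb⟩)
    ((isBoundedUnder_of (r := (· ≥ ·)) ⟨0, h0⟩).isCoboundedUnder_le)).symm

lemma aux_rpow_subadd {q : ℝ} (hq : 0 < q) (hq1 : q ≤ 1) {s t : ℝ} (hs : 0 ≤ s) (ht : 0 ≤ t) :
    (s + t) ^ q ≤ s ^ q + t ^ q := by
  lift s to ℝ≥0 using hs
  lift t to ℝ≥0 using ht
  have h := NNReal.rpow_add_rpow_le (p := q) (q := 1) s t hq hq1
  simp only [NNReal.rpow_one, one_div_one] at h
  have h2 : (s + t) ^ q ≤ ((s ^ q + t ^ q) ^ (1 / q)) ^ q := NNReal.rpow_le_rpow h hq.le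
  rw [← NNReal.rpow_mul, one_div_mul_cancel hq.ne', NNReal.rpow_one] at h2
  calc ((s:ℝ) + t) ^ q = (((s + t : ℝ≥0) : ℝ)) ^ q := by norm_num
    _ = (((s + t) ^ q : ℝ≥0) : ℝ) := by rw [NNReal.coe_rpow]
    _ ≤ (((s ^ q + t ^ q : ℝ≥0)) : ℝ) := by exact_mod_cast h2
    _ = (s:ℝ) ^ q + (t:ℝ) ^ q := by push_cast [NNReal.coe_rpow]; ring

lemma aux_convex {q : ℝ} (hq : 1 ≤ q) {l : ℝ} (hl0 : 0 < l) (hl1 : l < 1) {x y : ℝ}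
    (hx : 0 ≤ x) (hy : 0 ≤ y) :
    (x + y) ^ q ≤ (1 - l) ^ (1 - q) * x ^ q + l ^ (1 - q) * y ^ q := by
  have h1l : 0 < 1 - l := by linarith
  have hmem1 : x / (1 - l) ∈ Set.Ici (0:ℝ) := div_nonneg hx h1l.le
  have hmem2 : y / l ∈ Set.Ici (0:ℝ) := div_nonneg hy hl0.le
  have h := (convexOn_rpow hq).2 hmem1 hmem2 h1l.le hl0.le (by ring)
  simp only [smul_eq_mul] at h
  rw [mul_div_cancel₀ _ h1l.ne', mul_div_cancel₀ _ hl0.ne'] at h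
  refine h.trans (le_of_eq ?_)
  rw [Real.div_rpow hx h1l.le, Real.div_rpow hy hl0.le, Real.rpow_sub h1l,
    Real.rpow_sub hl0, Real.rpow_one, Real.rpow_one]
  ring

lemma aux_two_rpow {q : ℝ} (hq : 0 < q) (a b : ℝ) :
    |a - b| ^ q ≤ 2 ^ q * (|a| ^ q + |b| ^ q) := by
  have h1 : |a - b| ≤ 2 * max |a| |b| := by
    have := abs_sub a b
    rcases le_total |a| |b| with h | h
    · rw [max_eq_right h]; linarith
    · rw [max_eq_left h]; linarith
  have h0 : (0:ℝ) ≤ max |a| |b| := le_trans (abs_nonneg a) (le_max_left _ _)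
  calc |a - b| ^ q ≤ (2 * max |a| |b|) ^ q := Real.rpow_le_rpow (abs_nonneg _) h1 hq.le
    _ = 2 ^ q * (max |a| |b|) ^ q := Real.mul_rpow (by norm_num) h0
    _ ≤ 2 ^ q * (|a| ^ q + |b| ^ q) := by
        apply mul_le_mul_of_nonneg_left _ (Real.rpow_nonneg (by norm_num) q)
        rcases le_total |a| |b| with h | h
        · rw [max_eq_right h]
          nlinarith [Real.rpow_nonneg (abs_nonneg a) q]
        · rw [max_eq_left h]
          nlinarith [Real.rpow_nonneg (abs_nonneg b) q]

lemma aux_eps_ineq {q : ℝ} (hq : 0 < q) {ε : ℝ} (hε : 0 < ε) :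
    ∃ K : ℝ, 0 ≤ K ∧ ∀ a b : ℝ, |(|a + b| ^ q - |a| ^ q)| ≤ ε * |a| ^ q + K * |b| ^ q := by
  rcases le_or_gt q 1 with hq1 | hq1
  · refine ⟨1, zero_le_one, fun a b => ?_⟩
    have key : ∀ x y : ℝ, 0 ≤ x → 0 ≤ y → x ^ q - y ^ q ≤ |x - y| ^ q := by
      intro x y hx hy
      rcases le_total x y with h | h
      · have h' : x ^ q ≤ y ^ q := Real.rpow_le_rpow hx h hq.le
        have h'' : (0:ℝ) ≤ |x - y| ^ q := Real.rpow_nonneg (abs_nonneg _) _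
        linarith
      · have hsub := aux_rpow_subadd hq hq1 hy (sub_nonneg.2 h)
        have hxy : y + (x - y) = x := by ring
        rw [hxy] at hsub
        rw [abs_of_nonneg (sub_nonneg.2 h)]
        linarith
    have hmono : ∀ x y : ℝ, 0 ≤ x → 0 ≤ y → |x - y| ≤ |b| → |x ^ q - y ^ q| ≤ |b| ^ q := by
      intro x y hx hy hxy
      rw [abs_sub_le_iff]
      constructor
      · exact (key x y hx hy).trans (Real.rpow_le_rpow (abs_nonneg _) hxy hq.le)
      · rw [abs_sub_comm] at hxy
        exact (key y x hy hx).trans (Real.rpow_le_rpow (abs_nonneg _) hxy hq.le)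
    have habs : |(|a + b| - |a|)| ≤ |b| := by
      have h2 := abs_abs_sub_abs_le_abs_sub (a + b) a
      have h3 : a + b - a = b := by ring
      rwa [h3] at h2
    have := hmono |a + b| |a| (abs_nonneg _) (abs_nonneg _) habs
    have hε' : 0 ≤ ε * |a| ^ q := mul_nonneg hε.le (Real.rpow_nonneg (abs_nonneg _) _)
    rw [one_mul]
    linarith
  · -- q > 1
    have h2q : (1:ℝ) ≤ 2 ^ q := by
      rw [show (1:ℝ) = 2 ^ (0:ℝ) by rw [Real.rpow_zero]]
      exact Real.rpow_le_rpow_of_exponent_le one_le_two hq.le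
    have h2qpos : (0:ℝ) < 2 ^ q := by positivity
    set δ := ε / 2 ^ q with hδdef
    have hδ : 0 < δ := div_pos hε h2qpos
    obtain ⟨l, hl0, hl1, hlA⟩ : ∃ l : ℝ, 0 < l ∧ l < 1 ∧ (1 - l) ^ (1 - q) < 1 + δ := by
      have hc : ContinuousAt (fun t : ℝ => (1 - t) ^ (1 - q)) 0 := by
        have h1 : ContinuousAt (fun s : ℝ => s ^ (1 - q)) ((1:ℝ) - 0) := by
          rw [sub_zero]
          exact Real.continuousAt_rpow_const 1 (1 - q) (Or.inl one_ne_zero)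
        exact h1.comp ((continuous_const.sub continuous_id).continuousAt)
      have hval : ((1:ℝ) - 0) ^ (1 - q) = 1 := by rw [sub_zero, Real.one_rpow]
      have hev : ∀ᶠ t in 𝓝 (0:ℝ), (1 - t) ^ (1 - q) < 1 + δ := by
        have ht := hc.tendsto
        rw [hval] at ht
        exact ht.eventually_lt_const (by linarith)
      have hev2 : ∀ᶠ t in 𝓝 (0:ℝ), t < 1 := eventually_lt_nhds (by norm_num)
      have hcomb : ∀ᶠ t in 𝓝[>] (0:ℝ), t < 1 ∧ (1 - t) ^ (1 - q) < 1 + δ :=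
        (hev2.and hev).filter_mono nhdsWithin_le_nhds
      obtain ⟨l, hmem, h1, h2⟩ := (eventually_mem_nhdsWithin.and hcomb).exists
      exact ⟨l, hmem, h1, h2⟩
    set A := (1 - l) ^ (1 - q) with hA
    set B := l ^ (1 - q) with hB
    have h1l : 0 < 1 - l := by linarith
    have hA1 : 1 ≤ A := Real.one_le_rpow_of_pos_of_le_one_of_nonpos h1l (by linarith) (by linarith)
    have hB0 : 0 ≤ B := Real.rpow_nonneg hl0.le _
    have hAd : A - 1 ≤ δ := by linarith
    have hδε : δ * 2 ^ q = ε := by rw [hδdef]; exact div_mul_cancel₀ ε h2qpos.ne'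
    have hδle : δ ≤ ε := by nlinarith
    refine ⟨B + (A - 1) * 2 ^ q, by nlinarith, fun a b => ?_⟩
    set x := |a| with hx; set y := |b| with hy; set z := |a + b| with hz
    have hx0 : 0 ≤ x := abs_nonneg _
    have hy0 : 0 ≤ y := abs_nonneg _
    have hz0 : 0 ≤ z := abs_nonneg _
    have hxq : 0 ≤ x ^ q := Real.rpow_nonneg hx0 _
    have hyq : 0 ≤ y ^ q := Real.rpow_nonneg hy0 _
    have hzq : 0 ≤ z ^ q := Real.rpow_nonneg hz0 _
    have hzxy : z ≤ x + y := abs_add_le a b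
    have hxzy : x ≤ z + y := by
      have : |a| ≤ |a + b| + |b| := by
        have := abs_add_le (a + b) (-b); simpa using this
      exact this
    have hup : z ^ q ≤ A * x ^ q + B * y ^ q :=
      (Real.rpow_le_rpow hz0 hzxy hq.le).trans (aux_convex hq1.le hl0 hl1 hx0 hy0)
    have hdown : x ^ q ≤ A * z ^ q + B * y ^ q :=
      (Real.rpow_le_rpow hx0 hxzy hq.le).trans (aux_convex hq1.le hl0 hl1 hz0 hy0)
    have hdouble : z ^ q ≤ 2 ^ q * (x ^ q + y ^ q) := by
      have h5 := aux_two_rpow hq a (-b)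
      simp only [sub_neg_eq_add, abs_neg] at h5
      exact h5
    have hKε : (A - 1) * 2 ^ q ≤ ε := by nlinarith
    have hAε : A - 1 ≤ ε := hAd.trans hδle
    rw [abs_sub_le_iff]
    constructor
    · nlinarith [mul_le_mul_of_nonneg_right hAε hxq,
        mul_nonneg (mul_nonneg (sub_nonneg.2 hA1) h2qpos.le) hyq]
    · nlinarith [mul_le_mul_of_nonneg_right hKε hxq, mul_le_mul_of_nonneg_right hKε hyq,
        mul_le_mul_of_nonneg_left hdouble (sub_nonneg.2 hA1)]

/-- Concentration-compactness accounting for the critical norm: if `(u n)` is bounded in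
`L^q(ℝ^N)`, converges a.e. to `u`, the measures `|u n − u|^q dx` converge weak-* (against
continuous functions vanishing at infinity) to the finite Borel measure `ν`, and `ν_∞` is the
loss of mass at infinity, then
`limsup_n ∫ |u n|^q = ∫ |u|^q + ν(ℝ^N) + ν_∞`. -/
theorem limsup_critical_mass_decomposition (N : ℕ) (hN : 1 ≤ N) (q : ℝ) (hq : 0 < q)
    (u : ℕ → EuclideanSpace ℝ (Fin N) → ℝ) (U : EuclideanSpace ℝ (Fin N) → ℝ)
    (hmeas : ∀ n, Measurable (u n))
    (hbdd : ∃ C : ℝ≥0∞, C ≠ ⊤ ∧ ∀ n, ∫⁻ x, ENNReal.ofReal (|u n x| ^ q) ≤ C)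
    (hae : ∀ᵐ x, Tendsto (fun n => u n x) atTop (𝓝 (U x)))
    (ν : Measure (EuclideanSpace ℝ (Fin N))) [IsFiniteMeasure ν]
    (hν : ∀ φ : EuclideanSpace ℝ (Fin N) → ℝ, Continuous φ →
      Tendsto φ (cocompact (EuclideanSpace ℝ (Fin N))) (𝓝 0) →
      Tendsto (fun n => ∫ x, φ x * |u n x - U x| ^ q) atTop (𝓝 (∫ x, φ x ∂ν)))
    (νinf : ℝ≥0∞)
    (hνinf : Tendsto (fun R : ℝ =>
        limsup (fun n => ∫⁻ x in {x | R ≤ ‖x‖}, ENNReal.ofReal (|u n x - U x| ^ q)) atTop)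
      atTop (𝓝 νinf)) :
    limsup (fun n => ∫⁻ x, ENNReal.ofReal (|u n x| ^ q)) atTop =
      (∫⁻ x, ENNReal.ofReal (|U x| ^ q)) + ν Set.univ + νinf := by
  classical
  obtain ⟨C, hCtop, hC⟩ := hbdd
  have hUm : AEMeasurable U := aemeasurable_of_tendsto_metrizable_ae atTop
    (fun n => (hmeas n).aemeasurable) hae
  have habs : Continuous fun t : ℝ => |t| ^ q := by
    rw [continuous_iff_continuousAt]
    intro t
    exact (Real.continuousAt_rpow_const |t| q (Or.inr hq.le)).comp continuous_abs.continuousAt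
  have hfm : ∀ n, Measurable fun x : EuclideanSpace ℝ (Fin N) => |u n x| ^ q :=
    fun n => habs.measurable.comp (hmeas n)
  have hgm : AEMeasurable fun x : EuclideanSpace ℝ (Fin N) => |U x| ^ q :=
    habs.measurable.comp_aemeasurable hUm
  have hvm : ∀ n, AEMeasurable fun x : EuclideanSpace ℝ (Fin N) => |u n x - U x| ^ q :=
    fun n => habs.measurable.comp_aemeasurable ((hmeas n).aemeasurable.sub hUm)
  have hfpt : ∀ n x, 0 ≤ |u n x| ^ q := fun n x => Real.rpow_nonneg (abs_nonneg _) _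
  have hgpt : ∀ x, 0 ≤ |U x| ^ q := fun x => Real.rpow_nonneg (abs_nonneg _) _
  have hvpt : ∀ n x, 0 ≤ |u n x - U x| ^ q := fun n x => Real.rpow_nonneg (abs_nonneg _) _
  set a : ℕ → ℝ := fun n => ∫ x, |u n x| ^ q with ha_def
  set b : ℕ → ℝ := fun n => ∫ x, |u n x - U x| ^ q with hb_def
  set G : ℝ := ∫ x, |U x| ^ q with hG_def
  set Cr : ℝ := C.toReal with hCr_def
  set M : ℝ := 2 ^ q * (Cr + Cr) with hM_def
  have h2q0 : (0:ℝ) ≤ 2 ^ q := Real.rpow_nonneg (by norm_num) q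
  -- integrability
  have hfint : ∀ n, Integrable fun x : EuclideanSpace ℝ (Fin N) => |u n x| ^ q := by
    intro n
    refine ⟨(hfm n).aestronglyMeasurable, ?_⟩
    rw [hasFiniteIntegral_iff_ofReal (ae_of_all _ (hfpt n))]
    exact (hC n).trans_lt (lt_top_iff_ne_top.2 hCtop)
  have hglint : ∫⁻ x, ENNReal.ofReal (|U x| ^ q) ≤ C := by
    have hae2 : ∀ᵐ x, ENNReal.ofReal (|U x| ^ q)
        = liminf (fun n => ENNReal.ofReal (|u n x| ^ q)) atTop := by
      filter_upwards [hae] with x hx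
      have h1 : Tendsto (fun n => |u n x| ^ q) atTop (𝓝 (|U x| ^ q)) :=
        (habs.tendsto (U x)).comp hx
      have h2 : Tendsto (fun n => ENNReal.ofReal (|u n x| ^ q)) atTop
          (𝓝 (ENNReal.ofReal (|U x| ^ q))) := (ENNReal.continuous_ofReal.tendsto _).comp h1
      exact h2.liminf_eq.symm
    calc ∫⁻ x, ENNReal.ofReal (|U x| ^ q)
        = ∫⁻ x, liminf (fun n => ENNReal.ofReal (|u n x| ^ q)) atTop := lintegral_congr_ae hae2
      _ ≤ liminf (fun n => ∫⁻ x, ENNReal.ofReal (|u n x| ^ q)) atTop :=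
          lintegral_liminf_le' fun n => (ENNReal.measurable_ofReal.comp (hfm n)).aemeasurable
      _ ≤ C := liminf_le_of_frequently_le' (Frequently.of_forall hC)
  have hgint : Integrable fun x : EuclideanSpace ℝ (Fin N) => |U x| ^ q := by
    refine ⟨hgm.aestronglyMeasurable, ?_⟩
    rw [hasFiniteIntegral_iff_ofReal (ae_of_all _ hgpt)]
    exact hglint.trans_lt (lt_top_iff_ne_top.2 hCtop)
  have hvint : ∀ n, Integrable fun x : EuclideanSpace ℝ (Fin N) => |u n x - U x| ^ q := by
    intro n
    refine Integrable.mono' (((hfint n).add hgint).const_mul (2 ^ q))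
      (hvm n).aestronglyMeasurable (ae_of_all _ fun x => ?_)
    rw [Real.norm_eq_abs, abs_of_nonneg (hvpt n x)]
    exact aux_two_rpow hq _ _
  -- real bounds
  have ha0 : ∀ n, 0 ≤ a n := fun n => integral_nonneg (hfpt n)
  have hb0 : ∀ n, 0 ≤ b n := fun n => integral_nonneg (hvpt n)
  have hG0 : 0 ≤ G := integral_nonneg hgpt
  have haeq : ∀ n, ENNReal.ofReal (a n) = ∫⁻ x, ENNReal.ofReal (|u n x| ^ q) :=
    fun n => ofReal_integral_eq_lintegral_ofReal (hfint n) (ae_of_all _ (hfpt n))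
  have hGeq : ENNReal.ofReal G = ∫⁻ x, ENNReal.ofReal (|U x| ^ q) :=
    ofReal_integral_eq_lintegral_ofReal hgint (ae_of_all _ hgpt)
  have hfle : ∀ n, a n ≤ Cr := by
    intro n
    have h1 : ENNReal.ofReal (a n) ≤ C := (haeq n) ▸ hC n
    calc a n = (ENNReal.ofReal (a n)).toReal := (ENNReal.toReal_ofReal (ha0 n)).symm
      _ ≤ Cr := ENNReal.toReal_mono hCtop h1
  have hgle : G ≤ Cr := by
    have h1 : ENNReal.ofReal G ≤ C := hGeq ▸ hglint
    calc G = (ENNReal.ofReal G).toReal := (ENNReal.toReal_ofReal hG0).symm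
      _ ≤ Cr := ENNReal.toReal_mono hCtop h1
  have hvle : ∀ n, b n ≤ M := by
    intro n
    calc b n ≤ ∫ x, 2 ^ q * (|u n x| ^ q + |U x| ^ q) :=
        integral_mono (hvint n) (((hfint n).add hgint).const_mul _)
          (fun x => aux_two_rpow hq _ _)
      _ = 2 ^ q * (a n + G) := by rw [integral_const_mul, integral_add (f := fun x => |u n x| ^ q) (g := fun x => |U x| ^ q) (hfint n) hgint]
      _ ≤ M := mul_le_mul_of_nonneg_left (add_le_add (hfle n) hgle) h2q0
  have hM0 : 0 ≤ M := le_trans (hb0 0) (hvle 0)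
  -- Brezis-Lieb
  have hBL : Tendsto (fun n => a n - b n) atTop (𝓝 G) := by
    rw [Metric.tendsto_atTop]
    intro ε0 hε0
    set ε : ℝ := ε0 / (2 * (M + 1)) with hε_def
    have hεpos : 0 < ε := by
      apply div_pos hε0; nlinarith
    obtain ⟨K, hK0, hKey⟩ := aux_eps_ineq hq hεpos
    have hKey2 : ∀ n x, |(|u n x| ^ q - |u n x - U x| ^ q)|
        ≤ ε * |u n x - U x| ^ q + K * |U x| ^ q := by
      intro n x
      have := hKey (u n x - U x) (U x)
      rwa [sub_add_cancel] at this
    set W : ℕ → EuclideanSpace ℝ (Fin N) → ℝ := fun n x =>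
      max (|(|u n x| ^ q - |u n x - U x| ^ q - |U x| ^ q)| - ε * |u n x - U x| ^ q) 0
      with hW_def
    have hW0 : ∀ n x, 0 ≤ W n x := fun n x => le_max_right _ _
    have hWle : ∀ n x, W n x ≤ (K + 1) * |U x| ^ q := by
      intro n x
      apply max_le _ (mul_nonneg (by linarith) (hgpt x))
      have h1 := hKey2 n x
      have h2 : |(|u n x| ^ q - |u n x - U x| ^ q - |U x| ^ q)|
          ≤ |(|u n x| ^ q - |u n x - U x| ^ q)| + |U x| ^ q := by
        have := abs_sub (|u n x| ^ q - |u n x - U x| ^ q) (|U x| ^ q)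
        rwa [abs_of_nonneg (hgpt x)] at this
      nlinarith
    have hWm : ∀ n, AEStronglyMeasurable (W n) volume := by
      intro n
      have hX : AEMeasurable (fun x : EuclideanSpace ℝ (Fin N) =>
          |(|u n x| ^ q - |u n x - U x| ^ q - |U x| ^ q)|) volume :=
        continuous_abs.measurable.comp_aemeasurable
          (((hfm n).aemeasurable.sub (hvm n)).sub hgm)
      exact ((hX.sub ((hvm n).const_mul ε)).max aemeasurable_const).aestronglyMeasurable
    have hWint : ∀ n, Integrable (W n) := by
      intro n
      refine Integrable.mono' (hgint.const_mul (K + 1)) (hWm n) (ae_of_all _ fun x => ?_)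
      rw [Real.norm_eq_abs, abs_of_nonneg (hW0 n x)]
      exact hWle n x
    have hWtend : ∀ᵐ x, Tendsto (fun n => W n x) atTop (𝓝 0) := by
      filter_upwards [hae] with x hx
      have h1 : Tendsto (fun n => |u n x| ^ q) atTop (𝓝 (|U x| ^ q)) :=
        (habs.tendsto (U x)).comp hx
      have hsub : Tendsto (fun n => u n x - U x) atTop (𝓝 0) := by
        simpa using hx.sub_const (U x)
      have h2 : Tendsto (fun n => |u n x - U x| ^ q) atTop (𝓝 0) := by
        have := (habs.tendsto 0).comp hsub
        simpa [Function.comp_def, abs_zero, Real.zero_rpow hq.ne'] using this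
      have h3 := ((((h1.sub h2).sub (tendsto_const_nhds (x := |U x| ^ q))).abs.sub
        (h2.const_mul ε)).max (tendsto_const_nhds (x := (0:ℝ))))
      simpa using h3
    have hWlim : Tendsto (fun n => ∫ x, W n x) atTop (𝓝 0) := by
      have h := tendsto_integral_of_dominated_convergence (fun x => (K + 1) * |U x| ^ q)
        hWm (hgint.const_mul (K + 1))
        (fun n => ae_of_all _ fun x => by
          rw [Real.norm_eq_abs, abs_of_nonneg (hW0 n x)]; exact hWle n x)
        hWtend
      simpa using h
    obtain ⟨N0, hN0⟩ := eventually_atTop.1 (hWlim.eventually_lt_const (half_pos hε0))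
    refine ⟨N0, fun n hn => ?_⟩
    rw [Real.dist_eq]
    have hint1 : Integrable fun x : EuclideanSpace ℝ (Fin N) =>
        |u n x| ^ q - |u n x - U x| ^ q - |U x| ^ q := ((hfint n).sub (hvint n)).sub hgint
    have hdiff : a n - b n - G = ∫ x, (|u n x| ^ q - |u n x - U x| ^ q - |U x| ^ q) := by
      rw [integral_sub (f := fun x => |u n x| ^ q - |u n x - U x| ^ q)
        (g := fun x => |U x| ^ q) ((hfint n).sub (hvint n)) hgint,
        integral_sub (f := fun x => |u n x| ^ q) (g := fun x => |u n x - U x| ^ q)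
        (hfint n) (hvint n)]
    have hεM : ε * M ≤ ε0 / 2 - ε := by
      have h1 : ε * (M + 1) = ε0 / 2 := by
        rw [hε_def]; field_simp
      nlinarith
    calc |a n - b n - G| = |∫ x, (|u n x| ^ q - |u n x - U x| ^ q - |U x| ^ q)| := by
          rw [hdiff]
      _ ≤ ∫ x, |(|u n x| ^ q - |u n x - U x| ^ q - |U x| ^ q)| := by
          have := norm_integral_le_integral_norm
            (f := fun x : EuclideanSpace ℝ (Fin N) =>
              |u n x| ^ q - |u n x - U x| ^ q - |U x| ^ q) (μ := volume)
          simpa [Real.norm_eq_abs] using this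
      _ ≤ ∫ x, (W n x + ε * |u n x - U x| ^ q) := by
          refine integral_mono hint1.abs ((hWint n).add ((hvint n).const_mul ε)) fun x => ?_
          have := le_max_left (|(|u n x| ^ q - |u n x - U x| ^ q - |U x| ^ q)|
            - ε * |u n x - U x| ^ q) (0:ℝ)
          rw [hW_def]
          simp only
          linarith
      _ = (∫ x, W n x) + ε * b n := by
          rw [integral_add (f := W n) (g := fun x => ε * |u n x - U x| ^ q)
            (hWint n) ((hvint n).const_mul ε), integral_const_mul]
      _ < ε0 / 2 + ε * b n := by
          have := hN0 n hn; linarith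
      _ ≤ ε0 := by
          have h1 : ε * b n ≤ ε * M := mul_le_mul_of_nonneg_left (hvle n) hεpos.le
          linarith
  -- step 1
  have hb_bdd : IsBoundedUnder (· ≤ ·) atTop b := isBoundedUnder_of ⟨M, hvle⟩
  have hb_bdd' : IsBoundedUnder (· ≥ ·) atTop b := isBoundedUnder_of ⟨0, hb0⟩
  have hstep1 : limsup a atTop = G + limsup b atTop := by
    have h := aux_limsup_add hBL hb_bdd hb_bdd'
    rw [← h]
    congr 1
    funext n
    ring
  -- tails
  have hSm : ∀ R : ℝ, MeasurableSet {x : EuclideanSpace ℝ (Fin N) | R ≤ ‖x‖} :=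
    fun R => (isClosed_le continuous_const continuous_norm).measurableSet
  set s : ℝ → ℝ := fun R =>
    limsup (fun n => ∫ x in {x : EuclideanSpace ℝ (Fin N) | R ≤ ‖x‖}, |u n x - U x| ^ q) atTop
    with hs_def
  have htail0 : ∀ (R : ℝ) n, 0 ≤ ∫ x in {x : EuclideanSpace ℝ (Fin N) | R ≤ ‖x‖},
      |u n x - U x| ^ q := fun R n => integral_nonneg fun x => hvpt n x
  have htailM : ∀ (R : ℝ) n, (∫ x in {x : EuclideanSpace ℝ (Fin N) | R ≤ ‖x‖},
      |u n x - U x| ^ q) ≤ M := fun R n =>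
    (setIntegral_le_integral (hvint n) (ae_of_all _ fun x => hvpt n x)).trans (hvle n)
  have hs0 : ∀ R, 0 ≤ s R := fun R => aux_limsup_nonneg (htail0 R) (htailM R)
  have hsM : ∀ R, s R ≤ M := fun R => aux_limsup_le (htail0 R) (htailM R)
  have htprime : Tendsto (fun R => ENNReal.ofReal (s R)) atTop (𝓝 νinf) := by
    have heq : (fun R : ℝ => limsup (fun n => ∫⁻ x in {x | R ≤ ‖x‖},
        ENNReal.ofReal (|u n x - U x| ^ q)) atTop) = fun R => ENNReal.ofReal (s R) := by
      funext R
      have h1 : (fun n => ∫⁻ x in {x : EuclideanSpace ℝ (Fin N) | R ≤ ‖x‖},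
          ENNReal.ofReal (|u n x - U x| ^ q))
          = fun n => ENNReal.ofReal (∫ x in {x : EuclideanSpace ℝ (Fin N) | R ≤ ‖x‖},
            |u n x - U x| ^ q) := by
        funext n
        exact (ofReal_integral_eq_lintegral_ofReal ((hvint n).restrict)
          (ae_of_all _ fun x => hvpt n x)).symm
      rw [h1]
      exact aux_limsup_ofReal (htail0 R) (htailM R)
    exact heq ▸ hνinf
  have hνtop : νinf ≠ ⊤ := by
    have hle : νinf ≤ ENNReal.ofReal M :=
      le_of_tendsto htprime (Eventually.of_forall fun R => ENNReal.ofReal_le_ofReal (hsM R))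
    exact ne_top_of_le_ne_top ENNReal.ofReal_ne_top hle
  have hsl : Tendsto s atTop (𝓝 νinf.toReal) := by
    have h2 := (ENNReal.tendsto_toReal hνtop).comp htprime
    exact h2.congr fun R => ENNReal.toReal_ofReal (hs0 R)
  have hs2 : Tendsto (fun R => s (2 * R)) atTop (𝓝 νinf.toReal) :=
    hsl.comp (Tendsto.const_mul_atTop two_pos tendsto_id)
  -- measure of balls
  have hτ : Tendsto (fun R : ℝ => (ν {x : EuclideanSpace ℝ (Fin N) | ‖x‖ ≤ R}).toReal) atTop
      (𝓝 (ν Set.univ).toReal) := by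
    have hmono : Monotone fun R : ℝ => ν {x : EuclideanSpace ℝ (Fin N) | ‖x‖ ≤ R} :=
      fun R1 R2 h => measure_mono fun x hx => le_trans hx h
    have hsup : (⨆ R : ℝ, ν {x : EuclideanSpace ℝ (Fin N) | ‖x‖ ≤ R}) = ν Set.univ := by
      apply le_antisymm (iSup_le fun R => measure_mono (Set.subset_univ _))
      have huniv : (Set.univ : Set (EuclideanSpace ℝ (Fin N)))
          = ⋃ n : ℕ, {x : EuclideanSpace ℝ (Fin N) | ‖x‖ ≤ (n : ℝ)} := by
        ext x
        simp only [Set.mem_univ, Set.mem_iUnion, Set.mem_setOf_eq, true_iff]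
        exact exists_nat_ge ‖x‖
      have hdir : Directed (· ⊆ ·) fun n : ℕ =>
          {x : EuclideanSpace ℝ (Fin N) | ‖x‖ ≤ (n : ℝ)} := by
        intro m n
        refine ⟨max m n, fun x hx => ?_, fun x hx => ?_⟩
        · simp only [Set.mem_setOf_eq] at hx ⊢
          exact le_trans hx (by exact_mod_cast le_max_left m n)
        · simp only [Set.mem_setOf_eq] at hx ⊢
          exact le_trans hx (by exact_mod_cast le_max_right m n)
      rw [huniv, hdir.measure_iUnion]
      exact iSup_le fun n =>
        le_iSup (fun R : ℝ => ν {x : EuclideanSpace ℝ (Fin N) | ‖x‖ ≤ R}) ((n : ℕ) : ℝ)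
    have h1 := tendsto_atTop_iSup hmono
    rw [hsup] at h1
    exact (ENNReal.tendsto_toReal (measure_ne_top ν _)).comp h1
  -- the key estimate for fixed R
  have key : ∀ R : ℝ, 1 ≤ R → ∃ c : ℝ,
      ((ν {x : EuclideanSpace ℝ (Fin N) | ‖x‖ ≤ R}).toReal ≤ c ∧ c ≤ (ν Set.univ).toReal) ∧
      limsup b atTop ≤ c + s R ∧ c + s (2 * R) ≤ limsup b atTop := by
    intro R hR
    have hR0 : 0 < R := lt_of_lt_of_le one_pos hR
    set φ : EuclideanSpace ℝ (Fin N) → ℝ := fun x => min 1 (max 0 (2 - ‖x‖ / R)) with hφ_def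
    have hφcont : Continuous φ :=
      continuous_const.min (continuous_const.max (continuous_const.sub
        (continuous_norm.div_const R)))
    have hφ0 : ∀ x, 0 ≤ φ x := fun x => le_min zero_le_one (le_max_left 0 _)
    have hφ1 : ∀ x, φ x ≤ 1 := fun x => min_le_left _ _
    have hφone : ∀ x : EuclideanSpace ℝ (Fin N), ‖x‖ ≤ R → φ x = 1 := by
      intro x hx
      have h1 : ‖x‖ / R ≤ 1 := (div_le_one hR0).2 hx
      have h2 : (1:ℝ) ≤ 2 - ‖x‖ / R := by linarith
      rw [hφ_def]
      simp only
      rw [max_eq_right (le_trans zero_le_one h2), min_eq_left h2]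
    have hφzero : ∀ x : EuclideanSpace ℝ (Fin N), 2 * R ≤ ‖x‖ → φ x = 0 := by
      intro x hx
      have h1 : (2:ℝ) ≤ ‖x‖ / R := (le_div_iff₀ hR0).2 (by linarith)
      have h2 : 2 - ‖x‖ / R ≤ 0 := by linarith
      rw [hφ_def]
      simp only
      rw [max_eq_left h2, min_eq_right zero_le_one]
    have hφvan : Tendsto φ (cocompact (EuclideanSpace ℝ (Fin N))) (𝓝 0) := by
      have hev : ∀ᶠ x in cocompact (EuclideanSpace ℝ (Fin N)), φ x = 0 := by
        refine Filter.mem_cocompact.2 ⟨Metric.closedBall 0 (2 * R),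
          isCompact_closedBall 0 (2 * R), fun x hx => ?_⟩
        simp only [Set.mem_compl_iff, Metric.mem_closedBall, dist_zero_right, not_le] at hx
        exact hφzero x hx.le
      exact Tendsto.congr' (hev.mono fun x h => h.symm) tendsto_const_nhds
    have hconv := hν φ hφcont hφvan
    refine ⟨∫ x, φ x ∂ν, ⟨?_, ?_⟩, ?_, ?_⟩
    · have hφν_int : Integrable φ ν := by
        refine Integrable.mono' (integrable_const 1) hφcont.aestronglyMeasurable
          (ae_of_all _ fun x => ?_)
        rw [Real.norm_eq_abs, abs_of_nonneg (hφ0 x)]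
        exact hφ1 x
      have hBm : MeasurableSet {x : EuclideanSpace ℝ (Fin N) | ‖x‖ ≤ R} :=
        (isClosed_le continuous_norm continuous_const).measurableSet
      have hind : Integrable ({x : EuclideanSpace ℝ (Fin N) | ‖x‖ ≤ R}.indicator
          (1 : EuclideanSpace ℝ (Fin N) → ℝ)) ν := (integrable_const 1).indicator hBm
      have hle : ∀ x, ({x : EuclideanSpace ℝ (Fin N) | ‖x‖ ≤ R}.indicator
          (1 : EuclideanSpace ℝ (Fin N) → ℝ)) x ≤ φ x := by
        intro x
        by_cases hx : ‖x‖ ≤ R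
        · rw [Set.indicator_of_mem (show x ∈ {x : EuclideanSpace ℝ (Fin N) | ‖x‖ ≤ R} from hx),
            hφone x hx, Pi.one_apply]
        · rw [Set.indicator_of_notMem
            (show x ∉ {x : EuclideanSpace ℝ (Fin N) | ‖x‖ ≤ R} from hx)]
          exact hφ0 x
      have h1 := integral_mono hind hφν_int hle
      rwa [integral_indicator_one hBm] at h1
    · have hφν_int : Integrable φ ν := by
        refine Integrable.mono' (integrable_const 1) hφcont.aestronglyMeasurable
          (ae_of_all _ fun x => ?_)
        rw [Real.norm_eq_abs, abs_of_nonneg (hφ0 x)]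
        exact hφ1 x
      have h1 := integral_mono hφν_int (integrable_const 1) hφ1
      simpa [integral_const, smul_eq_mul, measureReal_def] using h1
    all_goals {
      have hφint : ∀ n, Integrable fun x => φ x * |u n x - U x| ^ q := by
        intro n
        refine Integrable.mono' (hvint n)
          ((hφcont.aemeasurable.mul (hvm n)).aestronglyMeasurable) (ae_of_all _ fun x => ?_)
        rw [Real.norm_eq_abs, abs_mul, abs_of_nonneg (hφ0 x), abs_of_nonneg (hvpt n x)]
        exact mul_le_of_le_one_left (hvpt n x) (hφ1 x)
      have hψint : ∀ n, Integrable fun x => (1 - φ x) * |u n x - U x| ^ q := by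
        intro n
        refine Integrable.mono' (hvint n)
          (((aemeasurable_const.sub hφcont.aemeasurable).mul (hvm n)).aestronglyMeasurable)
          (ae_of_all _ fun x => ?_)
        rw [Real.norm_eq_abs, abs_mul, abs_of_nonneg (by linarith [hφ1 x] : (0:ℝ) ≤ 1 - φ x),
          abs_of_nonneg (hvpt n x)]
        exact mul_le_of_le_one_left (hvpt n x) (by linarith [hφ0 x])
      have hsplit : ∀ n, b n = (∫ x, φ x * |u n x - U x| ^ q)
          + ∫ x, (1 - φ x) * |u n x - U x| ^ q := by
        intro n
        rw [← integral_add (f := fun x => φ x * |u n x - U x| ^ q)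
          (g := fun x => (1 - φ x) * |u n x - U x| ^ q) (hφint n) (hψint n)]
        exact integral_congr_ae (ae_of_all _ fun x => by ring)
      have hup : ∀ n, (∫ x, (1 - φ x) * |u n x - U x| ^ q)
          ≤ ∫ x in {x : EuclideanSpace ℝ (Fin N) | R ≤ ‖x‖}, |u n x - U x| ^ q := by
        intro n
        rw [← integral_indicator (hSm R)]
        refine integral_mono (hψint n) ((hvint n).indicator (hSm R)) fun x => ?_
        by_cases hx : R ≤ ‖x‖
        · rw [Set.indicator_of_mem
            (show x ∈ {x : EuclideanSpace ℝ (Fin N) | R ≤ ‖x‖} from hx)]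
          exact mul_le_of_le_one_left (hvpt n x) (by linarith [hφ0 x])
        · rw [Set.indicator_of_notMem
            (show x ∉ {x : EuclideanSpace ℝ (Fin N) | R ≤ ‖x‖} from hx)]
          push_neg at hx
          rw [hφone x hx.le]
          simp
      have hlow : ∀ n, (∫ x in {x : EuclideanSpace ℝ (Fin N) | 2 * R ≤ ‖x‖}, |u n x - U x| ^ q)
          ≤ ∫ x, (1 - φ x) * |u n x - U x| ^ q := by
        intro n
        rw [← integral_indicator (hSm (2 * R))]
        refine integral_mono ((hvint n).indicator (hSm (2 * R))) (hψint n) fun x => ?_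
        by_cases hx : 2 * R ≤ ‖x‖
        · rw [Set.indicator_of_mem
            (show x ∈ {x : EuclideanSpace ℝ (Fin N) | 2 * R ≤ ‖x‖} from hx), hφzero x hx]
          simp
        · rw [Set.indicator_of_notMem
            (show x ∉ {x : EuclideanSpace ℝ (Fin N) | 2 * R ≤ ‖x‖} from hx)]
          exact mul_nonneg (by linarith [hφ1 x]) (hvpt n x)
      have hφvM : ∀ n, (∫ x, φ x * |u n x - U x| ^ q) ≤ M := fun n =>
        (integral_mono (hφint n) (hvint n)
          (fun x => mul_le_of_le_one_left (hvpt n x) (hφ1 x))).trans (hvle n)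
      have hφv0 : ∀ n, 0 ≤ ∫ x, φ x * |u n x - U x| ^ q :=
        fun n => integral_nonneg fun x => mul_nonneg (hφ0 x) (hvpt n x)
      first
      | · -- upper bound
          have h1 : ∀ n, b n ≤ (∫ x, φ x * |u n x - U x| ^ q)
              + ∫ x in {x : EuclideanSpace ℝ (Fin N) | R ≤ ‖x‖}, |u n x - U x| ^ q := by
            intro n
            rw [hsplit n]
            exact add_le_add_right (hup n) _
          have h2 := limsup_le_limsup (Eventually.of_forall h1) hb_bdd'.isCoboundedUnder_le
            (isBoundedUnder_of ⟨M + M, fun n => add_le_add (hφvM n) (htailM R n)⟩)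
          have h3 := aux_limsup_add hconv (isBoundedUnder_of ⟨M, htailM R⟩)
            (isBoundedUnder_of (r := (· ≥ ·)) ⟨0, htail0 R⟩)
          exact h2.trans_eq h3
      | · -- lower bound
          have h1 : ∀ n, (∫ x, φ x * |u n x - U x| ^ q)
              + (∫ x in {x : EuclideanSpace ℝ (Fin N) | 2 * R ≤ ‖x‖}, |u n x - U x| ^ q)
              ≤ b n := by
            intro n
            rw [hsplit n]
            exact add_le_add_right (hlow n) _
          have h2 := limsup_le_limsup (Eventually.of_forall h1)
            ((isBoundedUnder_of (r := (· ≥ ·))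
              ⟨0, fun n => add_nonneg (hφv0 n) (htail0 (2 * R) n)⟩).isCoboundedUnder_le)
            hb_bdd
          have h3 := aux_limsup_add hconv (isBoundedUnder_of ⟨M, htailM (2 * R)⟩)
            (isBoundedUnder_of (r := (· ≥ ·)) ⟨0, htail0 (2 * R)⟩)
          exact h3.symm.trans_le h2
    }
  -- combine
  have hupper : limsup b atTop ≤ (ν Set.univ).toReal + νinf.toReal := by
    apply ge_of_tendsto (tendsto_const_nhds.add hsl)
    filter_upwards [eventually_ge_atTop (1:ℝ)] with R hR
    obtain ⟨c, ⟨_, hc2⟩, h1, _⟩ := key R hR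
    exact h1.trans (add_le_add_left hc2 _)
  have hlower : (ν Set.univ).toReal + νinf.toReal ≤ limsup b atTop := by
    apply le_of_tendsto (hτ.add hs2)
    filter_upwards [eventually_ge_atTop (1:ℝ)] with R hR
    obtain ⟨c, ⟨hc1, _⟩, _, h2⟩ := key R hR
    exact le_trans (add_le_add_left hc1 _) h2
  have hstep2 : limsup b atTop = (ν Set.univ).toReal + νinf.toReal :=
    le_antisymm hupper hlower
  -- final assembly
  have hgoalL : limsup (fun n => ∫⁻ x, ENNReal.ofReal (|u n x| ^ q)) atTop
      = ENNReal.ofReal (limsup a atTop) := by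
    rw [show (fun n => ∫⁻ x, ENNReal.ofReal (|u n x| ^ q)) = fun n => ENNReal.ofReal (a n)
      from funext fun n => (haeq n).symm]
    exact aux_limsup_ofReal ha0 hfle
  rw [hgoalL, hstep1, hstep2, ENNReal.ofReal_add hG0
    (add_nonneg ENNReal.toReal_nonneg ENNReal.toReal_nonneg),
    ENNReal.ofReal_add ENNReal.toReal_nonneg ENNReal.toReal_nonneg,
    ENNReal.ofReal_toReal (measure_ne_top ν _), ENNReal.ofReal_toReal hνtop,
    hGeq, add_assoc]
end

section
/- Let N ≥ 1 and 0 < p < ∞, and let g : ℝ^N → [0, ∞) be measurable. Let (u_n) be a sequence of measurable functions on ℝ^N with sup_n ∫_{ℝ^N} g |u_n|^p dx < ∞ that converges Lebesgue-almost everywhere to a function u. Suppose γ is a finite Borel measure on ℝ^N such that ∫_{ℝ^N} φ g |u_n − u|^p dx → ∫_{ℝ^N} φ dγ for every continuous function φ : ℝ^N → ℝ vanishing at infinity, and set γ_∞ = lim_{R→∞} limsup_{n→∞} ∫_{{‖x‖ ≥ R}} g |u_n − u|^p dx. Then limsup_{n→∞} ∫_{ℝ^N} g |u_n|^p dx = ∫_{ℝ^N}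 g |u|^p dx + γ(ℝ^N) + γ_∞. -/
open MeasureTheory Filter Topology
open scoped ENNReal
open scoped NNReal

private lemma ennreal_bddUnder (f : ℕ → ℝ≥0∞) : IsBoundedUnder (· ≤ ·) atTop f :=
  ⟨⊤, by simp⟩

private lemma ennreal_cobddUnder (f : ℕ → ℝ≥0∞) : IsCoboundedUnder (· ≤ ·) atTop f :=
  Filter.isCobounded_le_of_bot

private lemma limsup_add_tendsto_le {a b : ℕ → ℝ≥0∞} {L : ℝ≥0∞}
    (ha : Tendsto a atTop (𝓝 L)) :
    limsup (fun n => a n + b n) atTop ≤ L + limsup b atTop := by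
  rcases eq_or_ne L ⊤ with rfl | hL
  · simp
  refine ENNReal.le_of_forall_pos_le_add fun ε hε _ => ?_
  have hev : ∀ᶠ n in atTop, a n ≤ L + ε :=
    ha.eventually_le_const (ENNReal.lt_add_right hL (by exact_mod_cast hε.ne'))
  calc limsup (fun n => a n + b n) atTop
      ≤ limsup (fun n => (L + ε) + b n) atTop :=
        limsup_le_limsup (hev.mono fun n h => add_le_add_left h _)
    _ = (L + ε) + limsup b atTop :=
        limsup_const_add atTop b (L + ε) (ennreal_bddUnder b) (ennreal_cobddUnder b)
    _ = L + limsup b atTop + ε := by rw [add_right_comm]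

private lemma le_limsup_add_tendsto {a b : ℕ → ℝ≥0∞} {L : ℝ≥0∞}
    (ha : Tendsto a atTop (𝓝 L)) :
    L + limsup b atTop ≤ limsup (fun n => a n + b n) atTop := by
  have hba : limsup b atTop ≤ limsup (fun n => a n + b n) atTop :=
    limsup_le_limsup (Eventually.of_forall fun n => le_add_self)
  rcases eq_or_ne L ⊤ with rfl | hL
  · have : limsup a atTop ≤ limsup (fun n => a n + b n) atTop :=
      limsup_le_limsup (Eventually.of_forall fun n => le_self_add)
    rw [ha.limsup_eq] at this
    simp [top_le_iff.1 this]
  refine ENNReal.le_of_forall_pos_le_add fun ε hε _ => ?_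
  have hev : ∀ᶠ n in atTop, L - ε ≤ a n := by
    rcases le_or_gt L ε with h | h
    · exact Eventually.of_forall fun n => by simp [tsub_eq_zero_of_le h]
    · exact ha.eventually_const_le
        (ENNReal.sub_lt_self hL (pos_of_gt h).ne' (by exact_mod_cast hε.ne'))
  have key : (L - ε) + limsup b atTop ≤ limsup (fun n => a n + b n) atTop := by
    calc (L - ε) + limsup b atTop
        = limsup (fun n => (L - ε) + b n) atTop :=
          (limsup_const_add atTop b (L - ε) (ennreal_bddUnder b) (ennreal_cobddUnder b)).symm
      _ ≤ limsup (fun n => a n + b n) atTop :=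
          limsup_le_limsup (hev.mono fun n h => add_le_add_left h _)
  calc L + limsup b atTop ≤ ((L - ε) + ε) + limsup b atTop := by
        gcongr; exact le_tsub_add
    _ = ((L - ε) + limsup b atTop) + ε := by ring
    _ ≤ limsup (fun n => a n + b n) atTop + ε := by gcongr

private lemma limsup_add_const' (b : ℕ → ℝ≥0∞) (c : ℝ≥0∞) :
    limsup (fun n => b n + c) atTop = limsup b atTop + c :=
  limsup_add_const atTop b c (ennreal_bddUnder b) (ennreal_cobddUnder b)

private lemma rpow_add_le_aux {p : ℝ} (hp : 0 < p) {ε : ℝ} (hε : 0 < ε) :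
    ∃ C : ℝ, 0 ≤ C ∧ ∀ x y : ℝ, 0 ≤ x → 0 ≤ y →
      (x + y) ^ p ≤ (1 + ε) * x ^ p + C * y ^ p := by
  set δ : ℝ := (1 + ε) ^ (1 / p) - 1 with hδdef
  have h1ε : (1 : ℝ) < 1 + ε := by linarith
  have hδ : 0 < δ := by
    have : (1 : ℝ) < (1 + ε) ^ (1 / p) :=
      (Real.one_lt_rpow_iff_of_pos (by linarith)).2 (Or.inl ⟨h1ε, by positivity⟩)
    simpa [hδdef] using sub_pos.2 this
  have hδp : (1 + δ) ^ p = 1 + ε := by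
    rw [hδdef]
    have : (1 + ((1 + ε) ^ (1 / p) - 1)) = (1 + ε) ^ (1 / p) := by ring
    rw [this, ← Real.rpow_mul (by positivity), one_div_mul_cancel hp.ne', Real.rpow_one]
  refine ⟨(1 + 1 / δ) ^ p, by positivity, fun x y hx hy => ?_⟩
  rcases le_or_gt y (δ * x) with h | h
  · have hxy : x + y ≤ (1 + δ) * x := by nlinarith
    calc (x + y) ^ p ≤ ((1 + δ) * x) ^ p :=
          Real.rpow_le_rpow (by positivity) hxy hp.le
      _ = (1 + δ) ^ p * x ^ p := Real.mul_rpow (by positivity) hx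
      _ = (1 + ε) * x ^ p := by rw [hδp]
      _ ≤ (1 + ε) * x ^ p + (1 + 1 / δ) ^ p * y ^ p := le_add_of_nonneg_right (by positivity)
  · have hxy : x + y ≤ (1 + 1 / δ) * y := by
      have hx' : x ≤ y / δ := by
        rw [le_div_iff₀ hδ]; nlinarith
      calc x + y ≤ y / δ + y := by linarith
        _ = (1 + 1 / δ) * y := by field_simp; ring
    calc (x + y) ^ p ≤ ((1 + 1 / δ) * y) ^ p :=
          Real.rpow_le_rpow (by positivity) hxy hp.le
      _ = (1 + 1 / δ) ^ p * y ^ p := Real.mul_rpow (by positivity) hy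
      _ ≤ (1 + ε) * x ^ p + (1 + 1 / δ) ^ p * y ^ p := le_add_of_nonneg_left (by positivity)

private lemma bl_pointwise {p : ℝ} (hp : 0 < p) {ε : ℝ} (hε : 0 < ε) :
    ∃ C : ℝ, 0 ≤ C ∧ ∀ a b : ℝ,
      abs (|a| ^ p - |a - b| ^ p) ≤ ε * |a - b| ^ p + C * |b| ^ p := by
  obtain ⟨C₀, hC₀, h₀⟩ := rpow_add_le_aux hp hε
  obtain ⟨C₁, hC₁, h₁⟩ := rpow_add_le_aux hp (half_pos hε)
  obtain ⟨C₂, hC₂, h₂⟩ := rpow_add_le_aux hp one_pos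
  refine ⟨C₀ + (ε / 2 * C₂ + C₁), by positivity, fun a b => ?_⟩
  have hab : |a| ≤ |a - b| + |b| := by simpa using abs_add_le (a - b) b
  have hab' : |a - b| ≤ |a| + |b| := abs_sub a b
  have hxp : ∀ x y : ℝ, 0 ≤ x → 0 ≤ y → x ≤ y → x ^ p ≤ y ^ p :=
    fun x y hx _ hxy => Real.rpow_le_rpow hx hxy hp.le
  have up : |a| ^ p - |a - b| ^ p ≤ ε * |a - b| ^ p + C₀ * |b| ^ p := by
    have := (hxp _ _ (abs_nonneg a) (by positivity) hab).trans
      (h₀ |a - b| |b| (abs_nonneg _) (abs_nonneg _))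
    linarith
  have habs : |a| ^ p ≤ (1 + 1) * |a - b| ^ p + C₂ * |b| ^ p :=
    (hxp _ _ (abs_nonneg a) (by positivity) hab).trans
      (h₂ |a - b| |b| (abs_nonneg _) (abs_nonneg _))
  have low : |a - b| ^ p - |a| ^ p ≤ ε * |a - b| ^ p + (ε / 2 * C₂ + C₁) * |b| ^ p := by
    have h3 : |a - b| ^ p ≤ (1 + ε / 2) * |a| ^ p + C₁ * |b| ^ p :=
      (hxp _ _ (abs_nonneg _) (by positivity) hab').trans
        (h₁ |a| |b| (abs_nonneg _) (abs_nonneg _))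
    nlinarith [Real.rpow_nonneg (abs_nonneg (a-b)) p, Real.rpow_nonneg (abs_nonneg b) p,
      Real.rpow_nonneg (abs_nonneg a) p]
  have hbp : (0:ℝ) ≤ |b| ^ p := Real.rpow_nonneg (abs_nonneg b) p
  rw [abs_le]
  constructor
  · nlinarith [mul_nonneg hC₀ hbp]
  · nlinarith [mul_nonneg (mul_nonneg (by linarith : (0:ℝ) ≤ ε/2) hC₂) hbp, mul_nonneg hC₁ hbp]

private lemma tendsto_abs_rpow {p : ℝ} (hp : 0 < p) {c : ℝ} {f : ℕ → ℝ}
    (hf : Tendsto f atTop (𝓝 c)) : Tendsto (fun n => |f n| ^ p) atTop (𝓝 (|c| ^ p)) := by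
  have h1 : ContinuousAt (fun t : ℝ => t ^ p) |c| :=
    Real.continuousAt_rpow_const _ _ (Or.inr hp.le)
  exact h1.tendsto.comp ((continuous_abs.tendsto c).comp hf)

set_option maxHeartbeats 1000000 in
/-- Concentration-compactness accounting for the weighted `L^p` term: if `g ≥ 0` is
measurable, `(u n)` satisfies `sup_n ∫ g |u n|^p < ∞` and converges a.e. to `u`, the measures
`g |u n − u|^p dx` converge weak-* (against continuous functions vanishing at infinity) to
the finite Borel measure `γ`, and `γ_∞` is the loss of mass at infinity, then
`limsup_n ∫ g |u n|^p = ∫ g |u|^p + γ(ℝ^N) + γ_∞`. -/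
theorem limsup_weighted_mass_decomposition (N : ℕ) (hN : 1 ≤ N) (p : ℝ) (hp : 0 < p)
    (g : EuclideanSpace ℝ (Fin N) → ℝ) (hgmeas : Measurable g) (hgnonneg : ∀ x, 0 ≤ g x)
    (u : ℕ → EuclideanSpace ℝ (Fin N) → ℝ) (U : EuclideanSpace ℝ (Fin N) → ℝ)
    (hmeas : ∀ n, Measurable (u n))
    (hbdd : ∃ C : ℝ≥0∞, C ≠ ⊤ ∧ ∀ n, ∫⁻ x, ENNReal.ofReal (g x * |u n x| ^ p) ≤ C)
    (hae : ∀ᵐ x, Tendsto (fun n => u n x) atTop (𝓝 (U x)))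
    (γ : Measure (EuclideanSpace ℝ (Fin N))) [IsFiniteMeasure γ]
    (hγ : ∀ φ : EuclideanSpace ℝ (Fin N) → ℝ, Continuous φ →
      Tendsto φ (cocompact (EuclideanSpace ℝ (Fin N))) (𝓝 0) →
      Tendsto (fun n => ∫ x, φ x * (g x * |u n x - U x| ^ p)) atTop (𝓝 (∫ x, φ x ∂γ)))
    (γinf : ℝ≥0∞)
    (hγinf : Tendsto (fun R : ℝ =>
        limsup (fun n => ∫⁻ x in {x | R ≤ ‖x‖}, ENNReal.ofReal (g x * |u n x - U x| ^ p)) atTop)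
      atTop (𝓝 γinf)) :
    limsup (fun n => ∫⁻ x, ENNReal.ofReal (g x * |u n x| ^ p)) atTop =
      (∫⁻ x, ENNReal.ofReal (g x * |U x| ^ p)) + γ Set.univ + γinf := by
  obtain ⟨C, hCtop, hC⟩ := hbdd
  -- abbreviations
  set v : ℕ → EuclideanSpace ℝ (Fin N) → ℝ := fun n x => g x * |u n x - U x| ^ p with hv
  set wU : EuclideanSpace ℝ (Fin N) → ℝ := fun x => g x * |U x| ^ p with hwU
  have hw_nn : ∀ n x, 0 ≤ g x * |u n x| ^ p :=
    fun n x => mul_nonneg (hgnonneg x) (Real.rpow_nonneg (abs_nonneg _) _)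
  have hv_nn : ∀ n x, 0 ≤ v n x :=
    fun n x => mul_nonneg (hgnonneg x) (Real.rpow_nonneg (abs_nonneg _) _)
  have hwU_nn : ∀ x, 0 ≤ wU x :=
    fun x => mul_nonneg (hgnonneg x) (Real.rpow_nonneg (abs_nonneg _) _)
  -- measurability
  have hUm : AEMeasurable U :=
    aemeasurable_of_tendsto_metrizable_ae atTop (fun n => (hmeas n).aemeasurable) hae
  have hcontabs : Continuous fun t : ℝ => |t| ^ p :=
    continuous_iff_continuousAt.2 fun t =>
      (Real.continuousAt_rpow_const _ _ (Or.inr hp.le)).comp continuous_abs.continuousAt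
  have habsp : Measurable fun t : ℝ => |t| ^ p := hcontabs.measurable
  have hwm : ∀ n, Measurable fun x => ENNReal.ofReal (g x * |u n x| ^ p) :=
    fun n => (hgmeas.mul (habsp.comp (hmeas n))).ennreal_ofReal
  have hvam : ∀ n, AEMeasurable (v n) :=
    fun n => hgmeas.aemeasurable.mul
      (habsp.comp_aemeasurable ((hmeas n).aemeasurable.sub hUm))
  have hvm : ∀ n, AEMeasurable fun x => ENNReal.ofReal (v n x) :=
    fun n => (hvam n).ennreal_ofReal
  have hwUam : AEMeasurable wU := hgmeas.aemeasurable.mul (habsp.comp_aemeasurable hUm)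
  have hwUm : AEMeasurable fun x => ENNReal.ofReal (wU x) := hwUam.ennreal_ofReal
  set A : ℕ → ℝ≥0∞ := fun n => ∫⁻ x, ENNReal.ofReal (g x * |u n x| ^ p) with hA
  set B : ℕ → ℝ≥0∞ := fun n => ∫⁻ x, ENNReal.ofReal (v n x) with hB
  set c : ℝ≥0∞ := ∫⁻ x, ENNReal.ofReal (wU x) with hc
  have hAC : ∀ n, A n ≤ C := hC
  -- c ≤ C
  have hcC : c ≤ C := by
    have hae1 : ∀ᵐ x, ENNReal.ofReal (wU x) =
        liminf (fun n => ENNReal.ofReal (g x * |u n x| ^ p)) atTop := by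
      filter_upwards [hae] with x hx
      have : Tendsto (fun n => ENNReal.ofReal (g x * |u n x| ^ p)) atTop
          (𝓝 (ENNReal.ofReal (wU x))) :=
        ENNReal.tendsto_ofReal ((tendsto_abs_rpow hp hx).const_mul (g x))
      exact this.liminf_eq.symm
    calc c = ∫⁻ x, liminf (fun n => ENNReal.ofReal (g x * |u n x| ^ p)) atTop :=
          lintegral_congr_ae hae1
      _ ≤ liminf A atTop := lintegral_liminf_le hwm
      _ ≤ limsup A atTop := liminf_le_limsup
      _ ≤ C := limsup_le_of_le (by isBoundedDefault) (Eventually.of_forall hAC)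
  have hc_top : c ≠ ⊤ := (hcC.trans_lt hCtop.lt_top).ne
  -- B n bounded
  obtain ⟨C₂, hC₂0, hkey2⟩ := rpow_add_le_aux hp one_pos
  set CB : ℝ≥0∞ := ENNReal.ofReal (1 + 1) * C + ENNReal.ofReal C₂ * c with hCB
  have hBle : ∀ n, B n ≤ CB := by
    intro n
    have hpt : ∀ x, ENNReal.ofReal (v n x) ≤
        ENNReal.ofReal (1 + 1) * ENNReal.ofReal (g x * |u n x| ^ p) +
        ENNReal.ofReal C₂ * ENNReal.ofReal (wU x) := by
      intro x
      have h1 : |u n x - U x| ^ p ≤ (1 + 1) * |u n x| ^ p + C₂ * |U x| ^ p :=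
        (Real.rpow_le_rpow (abs_nonneg _) (abs_sub _ _) hp.le).trans
          (hkey2 _ _ (abs_nonneg _) (abs_nonneg _))
      have h2 : v n x ≤ (1 + 1) * (g x * |u n x| ^ p) + C₂ * wU x := by
        have := mul_le_mul_of_nonneg_left h1 (hgnonneg x)
        simp only [hv, hwU]; nlinarith [hgnonneg x]
      calc ENNReal.ofReal (v n x)
          ≤ ENNReal.ofReal ((1 + 1) * (g x * |u n x| ^ p) + C₂ * wU x) :=
            ENNReal.ofReal_le_ofReal h2
        _ ≤ ENNReal.ofReal ((1 + 1) * (g x * |u n x| ^ p)) + ENNReal.ofReal (C₂ * wU x) :=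
            ENNReal.ofReal_add_le
        _ = ENNReal.ofReal (1 + 1) * ENNReal.ofReal (g x * |u n x| ^ p) +
            ENNReal.ofReal C₂ * ENNReal.ofReal (wU x) := by
            rw [ENNReal.ofReal_mul (by norm_num), ENNReal.ofReal_mul hC₂0]
    calc B n ≤ ∫⁻ x, (ENNReal.ofReal (1 + 1) * ENNReal.ofReal (g x * |u n x| ^ p) +
            ENNReal.ofReal C₂ * ENNReal.ofReal (wU x)) := lintegral_mono hpt
      _ = ENNReal.ofReal (1 + 1) * A n + ENNReal.ofReal C₂ * c := by
          rw [lintegral_add_left' (((hwm n).const_mul _).aemeasurable),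
            lintegral_const_mul' _ _ ENNReal.ofReal_ne_top,
            lintegral_const_mul' _ _ ENNReal.ofReal_ne_top]
      _ ≤ CB := by
          rw [hCB]; gcongr; exact hAC n
  have hCB_top : CB ≠ ⊤ :=
    ENNReal.add_ne_top.2 ⟨ENNReal.mul_ne_top ENNReal.ofReal_ne_top hCtop,
      ENNReal.mul_ne_top ENNReal.ofReal_ne_top hc_top⟩
  -- the Brezis-Lieb error term
  set Efn : ℕ → EuclideanSpace ℝ (Fin N) → ℝ :=
    fun n x => |(|u n x| ^ p - |u n x - U x| ^ p - |U x| ^ p)| with hEfn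
  set D : ℕ → ℝ≥0∞ := fun n => ∫⁻ x, ENNReal.ofReal (g x * Efn n x) with hD
  have hEam : ∀ n, AEMeasurable (fun x => ENNReal.ofReal (g x * Efn n x)) := by
    intro n
    refine (hgmeas.aemeasurable.mul ?_).ennreal_ofReal
    exact continuous_abs.measurable.comp_aemeasurable
      ((((habsp.comp (hmeas n)).aemeasurable.sub
        (habsp.comp_aemeasurable ((hmeas n).aemeasurable.sub hUm))).sub
        (habsp.comp_aemeasurable hUm)))
  have split1 : ∀ n, A n ≤ B n + c + D n := by
    intro n
    have hpt : ∀ x, ENNReal.ofReal (g x * |u n x| ^ p) ≤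
        ENNReal.ofReal (v n x) + ENNReal.ofReal (wU x) + ENNReal.ofReal (g x * Efn n x) := by
      intro x
      have h1 : |u n x| ^ p ≤ |u n x - U x| ^ p + |U x| ^ p + Efn n x := by
        have := le_abs_self (|u n x| ^ p - |u n x - U x| ^ p - |U x| ^ p)
        simp only [hEfn]; linarith
      have hr : g x * |u n x| ^ p ≤ v n x + wU x + g x * Efn n x := by
        have := mul_le_mul_of_nonneg_left h1 (hgnonneg x)
        simp only [hv, hwU]; nlinarith [hgnonneg x]
      calc ENNReal.ofReal (g x * |u n x| ^ p)
          ≤ ENNReal.ofReal (v n x + wU x + g x * Efn n x) := ENNReal.ofReal_le_ofReal hr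
        _ ≤ _ := le_trans ENNReal.ofReal_add_le
            (add_le_add_left ENNReal.ofReal_add_le _)
    calc A n ≤ ∫⁻ x, (ENNReal.ofReal (v n x) + ENNReal.ofReal (wU x) +
          ENNReal.ofReal (g x * Efn n x)) := lintegral_mono hpt
      _ = B n + c + D n := by
          rw [lintegral_add_right' _ (hEam n), lintegral_add_right' _ hwUm]
  have split2 : ∀ n, B n + c ≤ A n + D n := by
    intro n
    have hpt : ∀ x, ENNReal.ofReal (v n x) + ENNReal.ofReal (wU x) ≤
        ENNReal.ofReal (g x * |u n x| ^ p) + ENNReal.ofReal (g x * Efn n x) := by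
      intro x
      have h1 : |u n x - U x| ^ p + |U x| ^ p ≤ |u n x| ^ p + Efn n x := by
        have := neg_abs_le (|u n x| ^ p - |u n x - U x| ^ p - |U x| ^ p)
        simp only [hEfn]; linarith
      have hr : v n x + wU x ≤ g x * |u n x| ^ p + g x * Efn n x := by
        have := mul_le_mul_of_nonneg_left h1 (hgnonneg x)
        simp only [hv, hwU]; nlinarith [hgnonneg x]
      calc ENNReal.ofReal (v n x) + ENNReal.ofReal (wU x)
          = ENNReal.ofReal (v n x + wU x) := (ENNReal.ofReal_add (hv_nn n x) (hwU_nn x)).symm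
        _ ≤ ENNReal.ofReal (g x * |u n x| ^ p + g x * Efn n x) := ENNReal.ofReal_le_ofReal hr
        _ ≤ _ := ENNReal.ofReal_add_le
    calc B n + c = ∫⁻ x, (ENNReal.ofReal (v n x) + ENNReal.ofReal (wU x)) :=
          (lintegral_add_right' _ hwUm).symm
      _ ≤ ∫⁻ x, (ENNReal.ofReal (g x * |u n x| ^ p) + ENNReal.ofReal (g x * Efn n x)) :=
          lintegral_mono hpt
      _ = A n + D n := lintegral_add_right' _ (hEam n)
  -- D is eventually small
  have hDsmall : ∀ εn : ℝ≥0, 0 < εn → ∀ᶠ n in atTop, D n ≤ (εn : ℝ≥0∞) := by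
    intro εn hεn
    have hεn' : (0:ℝ) < (εn : ℝ) := hεn
    set Tb : ℝ := CB.toReal with hTb
    have hTb0 : 0 ≤ Tb := ENNReal.toReal_nonneg
    have hεr : (0:ℝ) < (εn : ℝ) / (2 * (Tb + 1)) := by positivity
    obtain ⟨Cb, hCb0, hbl⟩ := bl_pointwise hp hεr
    set εr : ℝ := (εn : ℝ) / (2 * (Tb + 1)) with hεrdef
    set hfun : ℕ → EuclideanSpace ℝ (Fin N) → ℝ :=
      fun n x => max (Efn n x - εr * |u n x - U x| ^ p) 0 with hhfun
    have hfun_nn : ∀ n x, 0 ≤ hfun n x := fun n x => le_max_right _ _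
    have hfun_le : ∀ n x, hfun n x ≤ (Cb + 1) * |U x| ^ p := by
      intro n x
      refine max_le ?_ (by positivity)
      have h1 : Efn n x ≤ εr * |u n x - U x| ^ p + (Cb + 1) * |U x| ^ p := by
        have h2 : Efn n x ≤ abs (|u n x| ^ p - |u n x - U x| ^ p) + |U x| ^ p := by
          simp only [hEfn]
          have := abs_sub (|u n x| ^ p - |u n x - U x| ^ p) (|U x| ^ p)
          have h3 : abs (|U x| ^ p) = |U x| ^ p :=
            abs_of_nonneg (Real.rpow_nonneg (abs_nonneg _) _)
          linarith [this, h3.le, h3.ge]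
        have := hbl (u n x) (U x)
        linarith
      linarith
    have hE_le : ∀ n x, Efn n x ≤ hfun n x + εr * |u n x - U x| ^ p := by
      intro n x
      have := le_max_left (Efn n x - εr * |u n x - U x| ^ p) 0
      simp only [hhfun]; linarith
    -- dominated convergence for hfun
    have Htend : Tendsto (fun n => ∫⁻ x, ENNReal.ofReal (g x * hfun n x)) atTop (𝓝 0) := by
      have hconc := tendsto_lintegral_of_dominated_convergence'
        (μ := (volume : Measure (EuclideanSpace ℝ (Fin N))))
        (F := fun n x => ENNReal.ofReal (g x * hfun n x))
        (f := fun _ => (0 : ℝ≥0∞))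
        (bound := fun x => ENNReal.ofReal ((Cb + 1) * wU x))
        ?_ ?_ ?_ ?_
      · simpa using hconc
      · intro n
        refine (hgmeas.aemeasurable.mul ?_).ennreal_ofReal
        refine AEMeasurable.max ?_ aemeasurable_const
        refine AEMeasurable.sub ?_ ?_
        · exact continuous_abs.measurable.comp_aemeasurable
            ((((habsp.comp (hmeas n)).aemeasurable.sub
              (habsp.comp_aemeasurable ((hmeas n).aemeasurable.sub hUm))).sub
              (habsp.comp_aemeasurable hUm)))
        · exact (habsp.comp_aemeasurable ((hmeas n).aemeasurable.sub hUm)).const_mul _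
      · intro n
        refine Eventually.of_forall fun x => ENNReal.ofReal_le_ofReal ?_
        have := mul_le_mul_of_nonneg_left (hfun_le n x) (hgnonneg x)
        simp only [hwU]; nlinarith [hgnonneg x]
      · have : (∫⁻ x, ENNReal.ofReal ((Cb + 1) * wU x)) =
            ENNReal.ofReal (Cb + 1) * c := by
          simp_rw [ENNReal.ofReal_mul (by positivity : (0:ℝ) ≤ Cb + 1)]
          rw [lintegral_const_mul' _ _ ENNReal.ofReal_ne_top]
        rw [this]
        exact ENNReal.mul_ne_top ENNReal.ofReal_ne_top hc_top
      · filter_upwards [hae] with x hx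
        have h1 : Tendsto (fun n => |u n x| ^ p) atTop (𝓝 (|U x| ^ p)) :=
          tendsto_abs_rpow hp hx
        have h2 : Tendsto (fun n => |u n x - U x| ^ p) atTop (𝓝 0) := by
          have h2' : Tendsto (fun n => u n x - U x) atTop (𝓝 0) := by
            simpa using hx.sub (tendsto_const_nhds (x := U x))
          have := tendsto_abs_rpow hp h2'
          simpa [Real.zero_rpow hp.ne', abs_zero] using this
        have h3 : Tendsto (fun n => hfun n x) atTop (𝓝 0) := by
          have h4 : Tendsto (fun n => Efn n x) atTop (𝓝 0) := by
            have := (((h1.sub h2).sub tendsto_const_nhds).abs :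
              Tendsto (fun n => |(|u n x| ^ p - |u n x - U x| ^ p - |U x| ^ p)|) atTop
                (𝓝 |(|U x| ^ p - 0 - |U x| ^ p)|))
            simpa using this
          have h5 := (h4.sub (h2.const_mul εr)).max (tendsto_const_nhds (x := (0:ℝ)))
          simp only [hhfun]
          simpa using h5
        have h6 : Tendsto (fun n => g x * hfun n x) atTop (𝓝 0) := by
          simpa using h3.const_mul (g x)
        simpa using ENNReal.tendsto_ofReal h6
    -- conclude
    have hDle : ∀ n, D n ≤ (∫⁻ x, ENNReal.ofReal (g x * hfun n x)) + ENNReal.ofReal εr * B n := by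
      intro n
      have hpt : ∀ x, ENNReal.ofReal (g x * Efn n x) ≤
          ENNReal.ofReal (g x * hfun n x) + ENNReal.ofReal εr * ENNReal.ofReal (v n x) := by
        intro x
        have hr : g x * Efn n x ≤ g x * hfun n x + εr * v n x := by
          have := mul_le_mul_of_nonneg_left (hE_le n x) (hgnonneg x)
          simp only [hv]; nlinarith [hgnonneg x]
        calc ENNReal.ofReal (g x * Efn n x)
            ≤ ENNReal.ofReal (g x * hfun n x + εr * v n x) := ENNReal.ofReal_le_ofReal hr
          _ ≤ ENNReal.ofReal (g x * hfun n x) + ENNReal.ofReal (εr * v n x) :=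
              ENNReal.ofReal_add_le
          _ = ENNReal.ofReal (g x * hfun n x) + ENNReal.ofReal εr * ENNReal.ofReal (v n x) := by
              rw [ENNReal.ofReal_mul hεr.le]
      calc D n ≤ ∫⁻ x, (ENNReal.ofReal (g x * hfun n x) +
            ENNReal.ofReal εr * ENNReal.ofReal (v n x)) := lintegral_mono hpt
        _ = (∫⁻ x, ENNReal.ofReal (g x * hfun n x)) + ENNReal.ofReal εr * B n := by
            rw [lintegral_add_right' _ ((hvm n).const_mul _),
              lintegral_const_mul' _ _ ENNReal.ofReal_ne_top]
    have hεB : ∀ n, ENNReal.ofReal εr * B n ≤ ENNReal.ofReal ((εn:ℝ) / 2) := by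
      intro n
      calc ENNReal.ofReal εr * B n ≤ ENNReal.ofReal εr * CB := by gcongr; exact hBle n
        _ = ENNReal.ofReal εr * ENNReal.ofReal Tb := by rw [hTb, ENNReal.ofReal_toReal hCB_top]
        _ = ENNReal.ofReal (εr * Tb) := (ENNReal.ofReal_mul hεr.le).symm
        _ ≤ ENNReal.ofReal ((εn:ℝ) / 2) := by
            refine ENNReal.ofReal_le_ofReal ?_
            rw [hεrdef, div_mul_eq_mul_div, div_le_div_iff₀ (by positivity) (by norm_num)]
            nlinarith [εn.coe_nonneg]
    have hev : ∀ᶠ n in atTop, (∫⁻ x, ENNReal.ofReal (g x * hfun n x)) ≤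
        ENNReal.ofReal ((εn:ℝ) / 2) := by
      refine Htend.eventually_le_const ?_
      exact ENNReal.ofReal_pos.2 (half_pos hεn')
    filter_upwards [hev] with n hn
    calc D n ≤ ENNReal.ofReal ((εn:ℝ) / 2) + ENNReal.ofReal ((εn:ℝ) / 2) :=
          (hDle n).trans (add_le_add hn (hεB n))
      _ = (εn : ℝ≥0∞) := by
          rw [← ENNReal.ofReal_add (by linarith : (0:ℝ) ≤ (εn:ℝ)/2) (by linarith : (0:ℝ) ≤ (εn:ℝ)/2)]
          rw [add_halves, ENNReal.ofReal_coe_nnreal]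
  -- Step A : limsup A = c + limsup B
  have stepA : limsup A atTop = c + limsup B atTop := by
    refine le_antisymm ?_ ?_
    · refine ENNReal.le_of_forall_pos_le_add fun εn hεn _ => ?_
      have hev := hDsmall εn hεn
      have hev2 : ∀ᶠ n in atTop, A n ≤ B n + (c + εn) := by
        filter_upwards [hev] with n hn
        calc A n ≤ B n + c + D n := split1 n
          _ ≤ B n + c + εn := add_le_add_right hn _
          _ = B n + (c + εn) := add_assoc _ _ _
      calc limsup A atTop ≤ limsup (fun n => B n + (c + εn)) atTop := limsup_le_limsup hev2
        _ = limsup B atTop + (c + εn) := limsup_add_const' B _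
        _ = c + limsup B atTop + εn := by ring
    · refine ENNReal.le_of_forall_pos_le_add fun εn hεn _ => ?_
      have hev := hDsmall εn hεn
      have hev2 : ∀ᶠ n in atTop, B n + c ≤ A n + εn := by
        filter_upwards [hev] with n hn
        calc B n + c ≤ A n + D n := split2 n
          _ ≤ A n + εn := add_le_add_right hn _
      calc c + limsup B atTop = limsup (fun n => B n + c) atTop := by
            rw [limsup_add_const' B c, add_comm]
        _ ≤ limsup (fun n => A n + (εn:ℝ≥0∞)) atTop := limsup_le_limsup hev2
        _ = limsup A atTop + εn := limsup_add_const' A _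
  -- Step B : limsup B = γ univ + γinf
  have hv_int : ∀ n, Integrable (v n) := by
    intro n
    refine ⟨(hvam n).aestronglyMeasurable, ?_⟩
    rw [hasFiniteIntegral_iff_ofReal (Eventually.of_forall (hv_nn n))]
    exact (hBle n).trans_lt hCB_top.lt_top
  have stepB : limsup B atTop = γ Set.univ + γinf := by
    set φ : ℕ → EuclideanSpace ℝ (Fin N) → ℝ :=
      fun R x => min 1 (max ((R:ℝ) + 1 - ‖x‖) 0) with hφ
    have φcont : ∀ R, Continuous (φ R) :=
      fun R => continuous_const.min ((continuous_const.sub continuous_norm).max continuous_const)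
    have φ0 : ∀ R x, 0 ≤ φ R x := fun R x => le_min zero_le_one (le_max_right _ _)
    have φ1 : ∀ R x, φ R x ≤ 1 := fun R x => min_le_left _ _
    have φeq1 : ∀ (R : ℕ) x, ‖x‖ ≤ (R:ℝ) → φ R x = 1 := by
      intro R x h
      simp only [hφ]
      exact min_eq_left (le_max_of_le_left (by linarith))
    have φeq0 : ∀ (R : ℕ) x, (R:ℝ) + 1 ≤ ‖x‖ → φ R x = 0 := by
      intro R x h
      simp only [hφ]
      rw [max_eq_right (by linarith), min_eq_right zero_le_one]
    have φzero : ∀ R, Tendsto (φ R) (cocompact (EuclideanSpace ℝ (Fin N))) (𝓝 0) := by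
      intro R
      have hev : ∀ᶠ x in cocompact (EuclideanSpace ℝ (Fin N)), φ R x = 0 := by
        filter_upwards [(isCompact_closedBall (0 : EuclideanSpace ℝ (Fin N))
          ((R:ℝ) + 1)).compl_mem_cocompact] with x hx
        have hx' : (R:ℝ) + 1 < ‖x‖ := by
          simpa [Metric.mem_closedBall, dist_zero_right, not_le] using hx
        exact φeq0 R x hx'.le
      exact Tendsto.congr' (hev.mono fun x hx => hx.symm) tendsto_const_nhds
    have hφγ_int : ∀ R : ℕ, Integrable (φ R) γ := by
      intro R
      refine (φcont R).integrable_of_hasCompactSupport ?_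
      refine HasCompactSupport.intro (isCompact_closedBall (0 : EuclideanSpace ℝ (Fin N))
        ((R:ℝ) + 1)) fun x hx => ?_
      refine φeq0 R x ?_
      have : (R:ℝ) + 1 < dist x 0 := by simpa [Metric.mem_closedBall, not_le] using hx
      rw [dist_zero_right] at this
      exact this.le
    have hφv_int : ∀ (R : ℕ) n, Integrable (fun x => φ R x * v n x) := by
      intro R n
      exact (hv_int n).bdd_mul (φcont R).aestronglyMeasurable
        (c := 1) (Eventually.of_forall fun x => by rw [Real.norm_eq_abs, abs_of_nonneg (φ0 R x)]; exact φ1 R x)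
    set P : ℕ → ℕ → ℝ≥0∞ := fun R n => ∫⁻ x, ENNReal.ofReal (φ R x * v n x) with hP
    set G : ℕ → ℝ≥0∞ := fun R => ENNReal.ofReal (∫ x, φ R x ∂γ) with hG
    have hPtend : ∀ R, Tendsto (fun n => P R n) atTop (𝓝 (G R)) := by
      intro R
      have h := hγ (φ R) (φcont R) (φzero R)
      have heq : ∀ n, P R n = ENNReal.ofReal (∫ x, φ R x * v n x) := by
        intro n
        rw [ofReal_integral_eq_lintegral_ofReal (hφv_int R n)
          (Eventually.of_forall fun x => mul_nonneg (φ0 R x) (hv_nn n x))]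
      exact (ENNReal.tendsto_ofReal h).congr fun n => (heq n).symm
    have hGle : ∀ R, G R ≤ γ Set.univ := by
      intro R
      have hint : ∫ x, φ R x ∂γ ≤ ∫ _, (1:ℝ) ∂γ :=
        integral_mono (hφγ_int R) (integrable_const 1) (φ1 R)
      rw [integral_const, smul_eq_mul, mul_one] at hint
      calc G R ≤ ENNReal.ofReal (γ Set.univ).toReal := ENNReal.ofReal_le_ofReal hint
        _ = γ Set.univ := ENNReal.ofReal_toReal (measure_ne_top γ _)
    have hGge : ∀ R : ℕ, γ (Metric.closedBall 0 (R:ℝ)) ≤ G R := by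
      intro R
      have hint : ∫ x, Set.indicator (Metric.closedBall (0 : EuclideanSpace ℝ (Fin N)) (R:ℝ))
          (fun _ => (1:ℝ)) x ∂γ ≤ ∫ x, φ R x ∂γ := by
        refine integral_mono ((integrable_const (1:ℝ)).indicator
          measurableSet_closedBall) (hφγ_int R) fun x => ?_
        by_cases hx : x ∈ Metric.closedBall (0 : EuclideanSpace ℝ (Fin N)) (R:ℝ)
        · rw [Set.indicator_of_mem hx]
          rw [φeq1 R x (by rwa [Metric.mem_closedBall, dist_zero_right] at hx)]
        · rw [Set.indicator_of_notMem hx]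
          exact φ0 R x
      have hind : ∫ x, Set.indicator (Metric.closedBall (0 : EuclideanSpace ℝ (Fin N)) (R:ℝ))
          (fun _ => (1:ℝ)) x ∂γ = (γ (Metric.closedBall 0 (R:ℝ))).toReal := by
        rw [integral_indicator_const (1:ℝ) measurableSet_closedBall]
        simp [Measure.real]
      calc γ (Metric.closedBall 0 (R:ℝ))
          = ENNReal.ofReal (γ (Metric.closedBall 0 (R:ℝ))).toReal :=
            (ENNReal.ofReal_toReal (measure_ne_top γ _)).symm
        _ ≤ G R := by
            rw [hG]
            exact ENNReal.ofReal_le_ofReal (by rw [← hind]; exact hint)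
    have hSmeas : ∀ R' : ℝ, MeasurableSet {x : EuclideanSpace ℝ (Fin N) | R' ≤ ‖x‖} :=
      fun R' => (isClosed_le continuous_const continuous_norm).measurableSet
    have hφvam : ∀ (R : ℕ) n, AEMeasurable fun x => ENNReal.ofReal (φ R x * v n x) :=
      fun R n => ((φcont R).measurable.aemeasurable.mul (hvam n)).ennreal_ofReal
    have hbound1 : ∀ (R : ℕ) n, B n ≤ P R n +
        ∫⁻ x in {x | (R:ℝ) ≤ ‖x‖}, ENNReal.ofReal (v n x) := by
      intro R n
      have hpt : ∀ x, ENNReal.ofReal (v n x) ≤ ENNReal.ofReal (φ R x * v n x) +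
          Set.indicator {x : EuclideanSpace ℝ (Fin N) | (R:ℝ) ≤ ‖x‖}
            (fun x => ENNReal.ofReal (v n x)) x := by
        intro x
        by_cases hx : x ∈ {x : EuclideanSpace ℝ (Fin N) | (R:ℝ) ≤ ‖x‖}
        · rw [Set.indicator_of_mem hx]; exact le_add_self
        · rw [Set.indicator_of_notMem hx, add_zero,
            φeq1 R x (le_of_not_ge hx), one_mul]
      calc B n ≤ ∫⁻ x, (ENNReal.ofReal (φ R x * v n x) +
            Set.indicator {x : EuclideanSpace ℝ (Fin N) | (R:ℝ) ≤ ‖x‖}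
              (fun x => ENNReal.ofReal (v n x)) x) := lintegral_mono hpt
        _ = P R n + ∫⁻ x in {x | (R:ℝ) ≤ ‖x‖}, ENNReal.ofReal (v n x) := by
            rw [lintegral_add_left' (hφvam R n), lintegral_indicator (hSmeas (R:ℝ)) _]
    have hbound2 : ∀ (R : ℕ) n, P R n +
        (∫⁻ x in {x | (R:ℝ) + 1 ≤ ‖x‖}, ENNReal.ofReal (v n x)) ≤ B n := by
      intro R n
      have hpt : ∀ x, ENNReal.ofReal (φ R x * v n x) +
          Set.indicator {x : EuclideanSpace ℝ (Fin N) | (R:ℝ) + 1 ≤ ‖x‖}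
            (fun x => ENNReal.ofReal (v n x)) x ≤ ENNReal.ofReal (v n x) := by
        intro x
        by_cases hx : x ∈ {x : EuclideanSpace ℝ (Fin N) | (R:ℝ) + 1 ≤ ‖x‖}
        · rw [Set.indicator_of_mem hx, φeq0 R x hx, zero_mul, ENNReal.ofReal_zero, zero_add]
        · rw [Set.indicator_of_notMem hx, add_zero]
          exact ENNReal.ofReal_le_ofReal (mul_le_of_le_one_left (hv_nn n x) (φ1 R x))
      calc P R n + (∫⁻ x in {x | (R:ℝ) + 1 ≤ ‖x‖}, ENNReal.ofReal (v n x))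
          = ∫⁻ x, (ENNReal.ofReal (φ R x * v n x) +
            Set.indicator {x : EuclideanSpace ℝ (Fin N) | (R:ℝ) + 1 ≤ ‖x‖}
              (fun x => ENNReal.ofReal (v n x)) x) := by
            rw [lintegral_add_left' (hφvam R n), lintegral_indicator (hSmeas ((R:ℝ) + 1)) _]
        _ ≤ B n := lintegral_mono hpt
    have upper : limsup B atTop ≤ γ Set.univ + γinf := by
      refine ge_of_tendsto' ((hγinf.comp tendsto_natCast_atTop_atTop).const_add
        (γ Set.univ)) fun k => ?_
      calc limsup B atTop
          ≤ limsup (fun n => P k n + ∫⁻ x in {x | (k:ℝ) ≤ ‖x‖},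
              ENNReal.ofReal (v n x)) atTop :=
            limsup_le_limsup (Eventually.of_forall (hbound1 k))
        _ ≤ G k + limsup (fun n => ∫⁻ x in {x | (k:ℝ) ≤ ‖x‖},
              ENNReal.ofReal (v n x)) atTop := limsup_add_tendsto_le (hPtend k)
        _ ≤ γ Set.univ + limsup (fun n => ∫⁻ x in {x | (k:ℝ) ≤ ‖x‖},
              ENNReal.ofReal (v n x)) atTop := add_le_add_left (hGle k) _
    have lower : γ Set.univ + γinf ≤ limsup B atTop := by
      have h1 : Tendsto (fun k : ℕ => γ (Metric.closedBall 0 (k:ℝ))) atTop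
          (𝓝 (γ Set.univ)) := by
        have hmono : Monotone fun k : ℕ =>
            Metric.closedBall (0 : EuclideanSpace ℝ (Fin N)) (k:ℝ) :=
          fun i j hij => Metric.closedBall_subset_closedBall (by exact_mod_cast hij)
        have := tendsto_measure_iUnion_atTop (μ := γ) hmono
        have huniv : ⋃ k : ℕ, Metric.closedBall (0 : EuclideanSpace ℝ (Fin N)) (k:ℝ) =
            Set.univ := by
          refine Set.eq_univ_of_forall fun x => ?_
          obtain ⟨k, hk⟩ := exists_nat_ge ‖x‖
          exact Set.mem_iUnion.2 ⟨k, by rwa [Metric.mem_closedBall, dist_zero_right]⟩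
        rwa [huniv] at this
      have h2 : Tendsto (fun k : ℕ => limsup (fun n => ∫⁻ x in {x | (k:ℝ) + 1 ≤ ‖x‖},
          ENNReal.ofReal (v n x)) atTop) atTop (𝓝 γinf) :=
        hγinf.comp (tendsto_atTop_add_const_right atTop 1 tendsto_natCast_atTop_atTop)
      refine le_of_tendsto' (h1.add h2) fun k => ?_
      calc γ (Metric.closedBall 0 (k:ℝ)) + limsup (fun n => ∫⁻ x in {x | (k:ℝ) + 1 ≤ ‖x‖},
            ENNReal.ofReal (v n x)) atTop
          ≤ G k + limsup (fun n => ∫⁻ x in {x | (k:ℝ) + 1 ≤ ‖x‖},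
              ENNReal.ofReal (v n x)) atTop := add_le_add_left (hGge k) _
        _ ≤ limsup (fun n => P k n + ∫⁻ x in {x | (k:ℝ) + 1 ≤ ‖x‖},
              ENNReal.ofReal (v n x)) atTop := le_limsup_add_tendsto (hPtend k)
        _ ≤ limsup B atTop := limsup_le_limsup (Eventually.of_forall (hbound2 k))
    exact le_antisymm upper lower
  rw [stepA, stepB, add_assoc]
end

section
/- Let 1 < p < N and p* = Np/(N−p), so that 1/p = 1/p* + 1/N. Let ν and ζ be finite nonnegative measures on a measurable space X, and let K > 0 be such that ν(E)^{p/p*} ≤ K^{−1} ζ(E) for every measurable set E, and ζ(X) = K · ν(X)^{p/p*}. Then for every measurable set E, either ν(E) = 0 or ν(E) = ν(X). -/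
open MeasureTheory Filter Topology
open scoped ENNReal

/-- Strict subadditivity of `x ↦ x ^ θ` on `ℝ` for `θ ∈ (0,1)` and positive arguments. -/
lemma real_rpow_add_lt {θ a b : ℝ} (hθ0 : 0 < θ) (hθ1 : θ < 1) (ha : 0 < a) (hb : 0 < b) :
    (a + b) ^ θ < a ^ θ + b ^ θ := by
  have hab : 0 < a + b := by linarith
  have hθ : θ - 1 < 0 := by linarith
  have h1 : (a + b) ^ (θ - 1) < a ^ (θ - 1) :=
    Real.rpow_lt_rpow_of_neg ha (by linarith) hθ
  have h2 : (a + b) ^ (θ - 1) < b ^ (θ - 1) :=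
    Real.rpow_lt_rpow_of_neg hb (by linarith) hθ
  have key : (a + b) ^ θ = a * (a + b) ^ (θ - 1) + b * (a + b) ^ (θ - 1) := by
    rw [← add_mul]
    rw [show θ = 1 + (θ - 1) by ring, Real.rpow_add hab, Real.rpow_one]; ring_nf
  rw [key]
  have ha' : a * (a + b) ^ (θ - 1) < a ^ θ := by
    calc a * (a + b) ^ (θ - 1) < a * a ^ (θ - 1) := by
          exact mul_lt_mul_of_pos_left h1 ha
      _ = a ^ θ := by
          rw [show θ = 1 + (θ - 1) by ring, Real.rpow_add ha, Real.rpow_one]; ring_nf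
  have hb' : b * (a + b) ^ (θ - 1) < b ^ θ := by
    calc b * (a + b) ^ (θ - 1) < b * b ^ (θ - 1) := by
          exact mul_lt_mul_of_pos_left h2 hb
      _ = b ^ θ := by
          rw [show θ = 1 + (θ - 1) by ring, Real.rpow_add hb, Real.rpow_one]; ring_nf
  linarith

/-- Strict subadditivity of `x ↦ x ^ θ` on `ℝ≥0∞` for finite nonzero arguments. -/
lemma ennreal_rpow_add_lt {θ : ℝ} {a b : ℝ≥0∞} (hθ0 : 0 < θ) (hθ1 : θ < 1)
    (ha0 : a ≠ 0) (ha : a ≠ ∞) (hb0 : b ≠ 0) (hb : b ≠ ∞) :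
    (a + b) ^ θ < a ^ θ + b ^ θ := by
  have hab : a + b ≠ ∞ := by simp [ha, hb]
  have h1 : (a ^ θ) ≠ ∞ := by simp [ENNReal.rpow_eq_top_iff, ha, hθ0.le, not_lt.2 hθ0.le]
  have h2 : (b ^ θ) ≠ ∞ := by simp [ENNReal.rpow_eq_top_iff, hb, hθ0.le, not_lt.2 hθ0.le]
  rw [← ENNReal.toReal_lt_toReal (by simp [ENNReal.rpow_eq_top_iff, hab, not_lt.2 hθ0.le])
    (by simp [ENNReal.add_eq_top, h1, h2])]
  rw [ENNReal.toReal_add h1 h2, ← ENNReal.toReal_rpow, ← ENNReal.toReal_rpow,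
    ← ENNReal.toReal_rpow, ENNReal.toReal_add ha hb]
  exact real_rpow_add_lt hθ0 hθ1 (ENNReal.toReal_pos ha0 ha) (ENNReal.toReal_pos hb0 hb)

/-- **Measure-theoretic dichotomy.** Let `p* = Np/(N−p)`. If the finite measures `ν, ζ`
satisfy `ν(E)^{p/p*} ≤ K⁻¹ ζ(E)` for every measurable `E` and `ζ(X) = K ν(X)^{p/p*}`, then
for every measurable `E`, either `ν(E) = 0` or `ν(E) = ν(X)`. -/
theorem measure_dichotomy (N : ℕ) (p : ℝ) (hp : 1 < p) (hpN : p < (N : ℝ))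
    {X : Type*} [MeasurableSpace X] (ν ζ : Measure X)
    [IsFiniteMeasure ν] [IsFiniteMeasure ζ]
    (K : ℝ) (hK : 0 < K)
    (hle : ∀ E : Set X, MeasurableSet E →
      (ν E) ^ (p / ((N : ℝ) * p / ((N : ℝ) - p))) ≤ (ENNReal.ofReal K)⁻¹ * ζ E)
    (heq : ζ Set.univ = ENNReal.ofReal K * (ν Set.univ) ^ (p / ((N : ℝ) * p / ((N : ℝ) - p)))) :
    ∀ E : Set X, MeasurableSet E → ν E = 0 ∨ ν E = ν Set.univ := by
  set θ : ℝ := p / ((N : ℝ) * p / ((N : ℝ) - p)) with hθdef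
  have hN : (0 : ℝ) < N := lt_trans (by linarith) hpN
  have hp0 : (0 : ℝ) < p := by linarith
  have hNp : (0 : ℝ) < (N : ℝ) - p := by linarith
  have hθeq : θ = ((N : ℝ) - p) / N := by
    field_simp [hθdef]
    rw [hθdef]; field_simp
  have hθ0 : 0 < θ := by rw [hθeq]; positivity
  have hθ1 : θ < 1 := by
    rw [hθeq, div_lt_one hN]; linarith
  intro E hE
  by_contra hcon
  push_neg at hcon
  obtain ⟨h0, huniv⟩ := hcon
  have hsum : ν E + ν Eᶜ = ν Set.univ := measure_add_measure_compl hE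
  have hEc0 : ν Eᶜ ≠ 0 := by
    intro h
    rw [h, add_zero] at hsum
    exact huniv hsum
  have hEfin : ν E ≠ ∞ := measure_ne_top ν E
  have hEcfin : ν Eᶜ ≠ ∞ := measure_ne_top ν Eᶜ
  have hKfin : ENNReal.ofReal K ≠ ∞ := ENNReal.ofReal_ne_top
  have hK0 : ENNReal.ofReal K ≠ 0 := by simp [hK, hK.le, ENNReal.ofReal_eq_zero, not_le]
  -- combine the two inequalities
  have hmain : (ν E) ^ θ + (ν Eᶜ) ^ θ ≤ (ν Set.univ) ^ θ := by
    have h1 := hle E hE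
    have h2 := hle Eᶜ hE.compl
    have hζ : ζ E + ζ Eᶜ = ζ Set.univ := measure_add_measure_compl hE
    calc (ν E) ^ θ + (ν Eᶜ) ^ θ
        ≤ (ENNReal.ofReal K)⁻¹ * ζ E + (ENNReal.ofReal K)⁻¹ * ζ Eᶜ := add_le_add h1 h2
      _ = (ENNReal.ofReal K)⁻¹ * ζ Set.univ := by rw [← mul_add, hζ]
      _ = (ν Set.univ) ^ θ := by
          rw [heq, ← mul_assoc, ENNReal.inv_mul_cancel hK0 hKfin, one_mul]
  have hlt : (ν Set.univ) ^ θ < (ν E) ^ θ + (ν Eᶜ) ^ θ := by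
    rw [← hsum]
    exact ennreal_rpow_add_lt hθ0 hθ1 h0 hEfin hEc0 hEcfin
  exact absurd hmain (not_le.2 hlt)
end
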